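/- arXiv:2208.14521 — 11 statements merged into one kernel-verified Lean document; each statement's English description precedes it below -/
import Mathlib

section
/- Let ℓ be a Laurent polynomial in d variables with positive integer coefficients, i.e. a finitely supported function c : ℤ^d → ℤ, not identically zero, with c(m) ≥ 1 for every m in its support, whose value at a point p of the open positive orthant (ℝ_{>0})^d is ℓ(p) = ∑_{m ∈ supp c} c(m) · ∏_{i<d} p_i^{m_i} (integer exponents). Then ℓ(p) ≥ 1 for every p ∈ (ℝ_{>0})^d if and only if the Newton polytope of ℓ — the convex hull in ℝ^d of the finite set supp c ⊆ ℤ^d ⊆ ℝ^d — contains the origin. -/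
/-!
Substituting `p = exp y` turns the monomial `p ^ m` into `exp ⟪m, y⟫`. If the origin lies in the
Newton polytope, then for every `y` some `m` in the support has `⟪m, y⟫ ≥ 0`, and that term alone
is at least `1`. Otherwise a separating hyperplane gives `y` with `⟪m, y⟫ < 0` on the whole
support, and the polynomial tends to `0` along the ray `t • y`.
-/

open Real Filter Topology Finset

lemma LinearMap.apply_eq_dotProduct {R ι : Type*} [CommSemiring R] [Fintype ι] [DecidableEq ι]
    (f : (ι → R) →ₗ[R] R) (x : ι → R) : f x = x ⬝ᵥ fun i => f (Pi.single i 1) := by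
  conv_lhs => rw [← univ_sum_single x]
  simp only [map_sum, dotProduct]
  refine sum_congr rfl fun i _ => ?_
  rw [← smul_eq_mul, ← map_smul, ← Pi.single_smul', smul_eq_mul, mul_one]

lemma zero_mem_convexHull_iff_forall_exists_dotProduct_nonneg {ι : Type*} [Fintype ι]
    {V : Set (ι → ℝ)} (hV : V.Finite) :
    (0 : ι → ℝ) ∈ convexHull ℝ V ↔ ∀ y : ι → ℝ, ∃ x ∈ V, 0 ≤ x ⬝ᵥ y := by
  constructor
  · intro h0 y
    by_contra! hneg
    have hconv : Convex ℝ {x : ι → ℝ | x ⬝ᵥ y < 0} :=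
      convex_halfSpace_lt ⟨fun _ _ => add_dotProduct .., fun _ _ => smul_dotProduct ..⟩ 0
    simpa using convexHull_min (t := {x | x ⬝ᵥ y < 0}) hneg hconv h0
  · classical
    intro h
    by_contra h0
    obtain ⟨f, u, hf0, hfV⟩ := geometric_hahn_banach_point_closed (convex_convexHull ℝ V)
      (hV.isClosed_convexHull (𝕜 := ℝ)) h0
    obtain ⟨x, hx, hfx⟩ := h (-fun i => f (Pi.single i 1))
    have hux : u < f x := hfV x (subset_convexHull ℝ V hx)
    have hf : f x = x ⬝ᵥ fun i => f (Pi.single i 1) :=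
      (f : (ι → ℝ) →ₗ[ℝ] ℝ).apply_eq_dotProduct x
    rw [map_zero] at hf0
    rw [dotProduct_neg] at hfx
    linarith

lemma one_le_sum_mul_exp_of_exists_nonneg {ι : Type*} {s : Finset ι} {a y : ι → ℝ}
    (ha : ∀ i ∈ s, 1 ≤ a i) (hy : ∃ i ∈ s, 0 ≤ y i) : 1 ≤ ∑ i ∈ s, a i * exp (y i) := by
  obtain ⟨i, hi, hyi⟩ := hy
  calc 1 ≤ a i * exp (y i) := one_le_mul_of_one_le_of_one_le (ha i hi) (one_le_exp hyi)
    _ ≤ ∑ j ∈ s, a j * exp (y j) :=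
      single_le_sum (fun j hj => mul_nonneg (zero_le_one.trans (ha j hj)) (exp_pos _).le) hi

lemma tendsto_sum_mul_exp_mul_atTop_nhds_zero {ι : Type*} {s : Finset ι} {y : ι → ℝ}
    (hy : ∀ i ∈ s, y i < 0) (a : ι → ℝ) :
    Tendsto (fun t => ∑ i ∈ s, a i * exp (t * y i)) atTop (𝓝 0) := by
  rw [← sum_const_zero (s := s)]
  refine tendsto_finsetSum s fun i hi => ?_
  simpa using (tendsto_exp_atBot.comp (tendsto_id.atTop_mul_const_of_neg (hy i hi))).const_mul (a i)

lemma prod_exp_zpow {ι : Type*} [Fintype ι] (y : ι → ℝ) (m : ι → ℤ) :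
    ∏ i, exp (y i) ^ m i = exp ((fun i => (m i : ℝ)) ⬝ᵥ y) := by
  simp only [dotProduct, exp_sum]
  refine prod_congr rfl fun i _ => ?_
  rw [mul_comm, exp_mul, rpow_intCast]

lemma prod_zpow_eq_exp_dotProduct_log {ι : Type*} [Fintype ι] {p : ι → ℝ} (hp : ∀ i, 0 < p i)
    (m : ι → ℤ) : ∏ i, p i ^ m i = exp ((fun i => (m i : ℝ)) ⬝ᵥ fun i => log (p i)) := by
  rw [← prod_exp_zpow]
  simp [exp_log (hp _)]

theorem laurent_ge_one_iff_newton_polytope_mem_zero_general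
    (d : ℕ) (c : (Fin d → ℤ) →₀ ℤ)
    (hpos : ∀ m ∈ c.support, 1 ≤ c m) :
    (∀ p : Fin d → ℝ, (∀ i, 0 < p i) →
        1 ≤ ∑ m ∈ c.support, (c m : ℝ) * ∏ i, p i ^ (m i)) ↔
      (0 : Fin d → ℝ) ∈
        convexHull ℝ ((fun m : Fin d → ℤ => fun i => (m i : ℝ)) ''
          (c.support : Set (Fin d → ℤ))) := by
  rw [zero_mem_convexHull_iff_forall_exists_dotProduct_nonneg (c.support.finite_toSet.image _)]
  simp only [Set.exists_mem_image, mem_coe]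
  constructor
  · intro h y
    by_contra! hneg
    obtain ⟨t, ht⟩ := ((tendsto_sum_mul_exp_mul_atTop_nhds_zero hneg fun m => (c m : ℝ)).eventually
      (gt_mem_nhds one_pos)).exists
    have h_ray := h (fun i => exp ((t • y) i)) fun i => exp_pos _
    simp only [prod_exp_zpow, dotProduct_smul, smul_eq_mul] at h_ray
    linarith
  · intro h p hp
    simp only [prod_zpow_eq_exp_dotProduct_log hp]
    exact one_le_sum_mul_exp_of_exists_nonneg (fun m hm => by exact_mod_cast hpos m hm)
      (h fun i => log (p i))

/-- A Laurent polynomial in `d` variables with positive integer coefficients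
(given by a finitely supported, nonzero coefficient function `c : ℤ^d →₀ ℤ`
with `c m ≥ 1` on its support) has value `≥ 1` at every point of the open
positive orthant if and only if its Newton polytope (the convex hull of its
support in `ℝ^d`) contains the origin. -/
theorem laurent_ge_one_iff_newton_polytope_mem_zero
    (d : ℕ) (c : (Fin d → ℤ) →₀ ℤ) (hc : c ≠ 0)
    (hpos : ∀ m ∈ c.support, 1 ≤ c m) :
    (∀ p : Fin d → ℝ, (∀ i, 0 < p i) →
        1 ≤ ∑ m ∈ c.support, (c m : ℝ) * ∏ i, p i ^ (m i)) ↔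
      (0 : Fin d → ℝ) ∈
        convexHull ℝ ((fun m : Fin d → ℤ => fun i => (m i : ℝ)) ''
          (c.support : Set (Fin d → ℤ))) :=
  laurent_ge_one_iff_newton_polytope_mem_zero_general d c hpos
end

section
/- Every rank-2 positive frieze sequence with exponents (1,2) is periodic with period 6: if x : ℤ → ℝ satisfies x(i) > 0 for all i, x(i−1)·x(i+1) = x(i) + 1 for odd i, and x(i−1)·x(i+1) = x(i)² + 1 for even i, then x(i+6) = x(i) for all i ∈ ℤ. (This is the B₂/C₂ case bc = 2 of the rank-2 classification.) -/
lemma rank2_frieze_even_step (x : ℤ → ℝ)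
    (hpos : ∀ i : ℤ, 0 < x i)
    (hodd : ∀ i : ℤ, Odd i → x (i - 1) * x (i + 1) = x i + 1)
    (heven : ∀ i : ℤ, Even i → x (i - 1) * x (i + 1) = x i ^ 2 + 1) :
    ∀ i : ℤ, Even i → x (i + 6) = x i := by
  intro i hi
  have o1 : Odd (i + 1) := Even.add_one hi
  have e2 : Even (i + 2) := by obtain ⟨k, hk⟩ := hi; exact ⟨k + 1, by omega⟩
  have o3 : Odd (i + 3) := by obtain ⟨k, hk⟩ := hi; exact ⟨k + 1, by omega⟩
  have e4 : Even (i + 4) := by obtain ⟨k, hk⟩ := hi; exact ⟨k + 2, by omega⟩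
  have o5 : Odd (i + 5) := by obtain ⟨k, hk⟩ := hi; exact ⟨k + 2, by omega⟩
  have h1 := hodd (i + 1) o1
  have h2 := heven (i + 2) e2
  have h3 := hodd (i + 3) o3
  have h4 := heven (i + 4) e4
  have h5 := hodd (i + 5) o5
  rw [show i + 1 - 1 = i by ring, show i + 1 + 1 = i + 2 by ring] at h1
  rw [show i + 2 - 1 = i + 1 by ring, show i + 2 + 1 = i + 3 by ring] at h2
  rw [show i + 3 - 1 = i + 2 by ring, show i + 3 + 1 = i + 4 by ring] at h3
  rw [show i + 4 - 1 = i + 3 by ring, show i + 4 + 1 = i + 5 by ring] at h4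
  rw [show i + 5 - 1 = i + 4 by ring, show i + 5 + 1 = i + 6 by ring] at h5
  have p0 := hpos i
  have p1 := hpos (i + 1)
  have p2 := hpos (i + 2)
  have p3 := hpos (i + 3)
  have p4 := hpos (i + 4)
  have hc : x (i + 2) = (x (i + 1) + 1) / x i := by
    field_simp; linarith [h1]
  have hd : x (i + 3) = (x (i + 2) ^ 2 + 1) / x (i + 1) := by
    field_simp; linarith [h2]
  have he : x (i + 4) = (x (i + 3) + 1) / x (i + 2) := by
    field_simp; linarith [h3]
  have hf : x (i + 5) = (x (i + 4) ^ 2 + 1) / x (i + 3) := by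
    field_simp; linarith [h4]
  have hg : x (i + 6) = (x (i + 5) + 1) / x (i + 4) := by
    field_simp; linarith [h5]
  rw [hg, hf, he, hd, hc]
  have hne0 : x i ≠ 0 := ne_of_gt p0
  have hne1 : x (i + 1) ≠ 0 := ne_of_gt p1
  have hd2 : (x (i + 1) + 1) / x i > 0 := by positivity
  have hd3 : ((((x (i + 1) + 1) / x i) ^ 2 + 1) / x (i + 1)) > 0 := by positivity
  field_simp
  ring

/-- Every rank-2 positive frieze sequence with exponents `(1,2)` (type `B₂/C₂`)
is periodic with period `6`. -/
theorem rank2_frieze_period_six (x : ℤ → ℝ)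
    (hpos : ∀ i : ℤ, 0 < x i)
    (hodd : ∀ i : ℤ, Odd i → x (i - 1) * x (i + 1) = x i + 1)
    (heven : ∀ i : ℤ, Even i → x (i - 1) * x (i + 1) = x i ^ 2 + 1) :
    ∀ i : ℤ, x (i + 6) = x i := by
  intro i
  rcases Int.even_or_odd i with hi | hi
  · exact rank2_frieze_even_step x hpos hodd heven i hi
  · have em1 : Even (i - 1) := by obtain ⟨k, hk⟩ := hi; exact ⟨k, by omega⟩
    have ep1 : Even (i + 1) := by obtain ⟨k, hk⟩ := hi; exact ⟨k + 1, by omega⟩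
    have h5 : x (i + 5) = x (i - 1) := by
      have := rank2_frieze_even_step x hpos hodd heven (i - 1) em1
      rwa [show i - 1 + 6 = i + 5 by ring] at this
    have h7 : x (i + 7) = x (i + 1) := by
      have := rank2_frieze_even_step x hpos hodd heven (i + 1) ep1
      rwa [show i + 1 + 6 = i + 7 by ring] at this
    have o6 : Odd (i + 6) := by obtain ⟨k, hk⟩ := hi; exact ⟨k + 3, by omega⟩
    have ha := hodd (i + 6) o6
    rw [show i + 6 - 1 = i + 5 by ring, show i + 6 + 1 = i + 7 by ring, h5, h7] at ha
    have hb := hodd i hi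
    linarith
end

section
/- Every rank-2 positive frieze sequence with exponents (1,3) is periodic with period 8: if x : ℤ → ℝ satisfies x(i) > 0 for all i, x(i−1)·x(i+1) = x(i) + 1 for odd i, and x(i−1)·x(i+1) = x(i)³ + 1 for even i, then x(i+8) = x(i) for all i ∈ ℤ. (This is the G₂ case bc = 3 of the rank-2 classification.) -/
/-!
Shifting a frieze by an even amount preserves its exchange relations, so it suffices to show
`x 8 = x 0` and `x 9 = x 1`. Positivity lets each relation be solved for its last term, which
expresses `x 2, …, x 9` as Laurent polynomials in `x 0, x 1` (the cluster variables of type `G₂`);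
computing them in turn, the eighth and ninth return to `x 0` and `x 1`.
-/

def IsPositiveFrieze (b c : ℕ) (x : ℤ → ℝ) : Prop :=
  (∀ i, 0 < x i) ∧
    (∀ i, Odd i → x (i - 1) * x (i + 1) = x i ^ b + 1) ∧
    (∀ i, Even i → x (i - 1) * x (i + 1) = x i ^ c + 1)

namespace IsPositiveFrieze

variable {b c : ℕ} {x : ℤ → ℝ}

theorem comp_add_even (hx : IsPositiveFrieze b c x) {n : ℤ} (hn : Even n) :
    IsPositiveFrieze b c (fun i => x (i + n)) := by
  obtain ⟨hpos, hodd, heven⟩ := hx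
  refine ⟨fun i => hpos _, fun i hi => ?_, fun i hi => ?_⟩
  · simpa only [sub_add_eq_add_sub, add_right_comm i 1 n] using hodd (i + n) (hi.add_even hn)
  · simpa only [sub_add_eq_add_sub, add_right_comm i 1 n] using heven (i + n) (hi.add hn)

end IsPositiveFrieze

theorem g2_exchange_eight_steps {x₀ x₁ x₂ x₃ x₄ x₅ x₆ x₇ x₈ x₉ : ℝ} (h₀ : 0 < x₀) (h₁ : 0 < x₁)
    (r₁ : x₀ * x₂ = x₁ + 1) (r₂ : x₁ * x₃ = x₂ ^ 3 + 1)
    (r₃ : x₂ * x₄ = x₃ + 1) (r₄ : x₃ * x₅ = x₄ ^ 3 + 1)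
    (r₅ : x₄ * x₆ = x₅ + 1) (r₆ : x₅ * x₇ = x₆ ^ 3 + 1)
    (r₇ : x₆ * x₈ = x₇ + 1) (r₈ : x₇ * x₉ = x₈ ^ 3 + 1) :
    x₈ = x₀ ∧ x₉ = x₁ := by
  set a := x₀
  set b := x₁
  have solve {p q r : ℝ} (hp : 0 < p) (h : p * q = r) : q = r / p := by
    rw [eq_div_iff hp.ne']; linear_combination h
  have e₂ : x₂ = (b + 1) / a := solve h₀ r₁
  have e₃ : x₃ = (a ^ 3 + (b + 1) ^ 3) / (a ^ 3 * b) := by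
    rw [solve h₁ r₂, e₂]; field_simp; ring
  have e₄ : x₄ = (a ^ 3 + (b + 1) ^ 2) / (a ^ 2 * b) := by
    rw [solve (by rw [e₂]; positivity) r₃, e₂, e₃]
    field_simp; ring
  have e₅ : x₅ = (a ^ 6 + 3 * a ^ 3 * b + 2 * a ^ 3 + (b + 1) ^ 3) / (a ^ 3 * b ^ 2) := by
    rw [solve (by rw [e₃]; positivity) r₄, e₃, e₄]
    field_simp; ring
  have e₆ : x₆ = (a ^ 3 + b + 1) / (a * b) := by
    rw [solve (by rw [e₄]; positivity) r₅, e₄, e₅]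
    field_simp; ring
  have e₇ : x₇ = (a ^ 3 + 1) / b := by
    rw [solve (by rw [e₅]; positivity) r₆, e₅, e₆]
    field_simp; ring
  have e₈ : x₈ = a := by
    rw [solve (by rw [e₆]; positivity) r₇, e₆, e₇]
    field_simp; ring
  refine ⟨e₈, ?_⟩
  rw [solve (by rw [e₇]; positivity) r₈, e₇, e₈]
  field_simp

theorem IsPositiveFrieze.g2_apply_eight_eq_and_apply_nine_eq {x : ℤ → ℝ}
    (hx : IsPositiveFrieze 1 3 x) : x 8 = x 0 ∧ x 9 = x 1 := by
  obtain ⟨hpos, hodd, heven⟩ := hx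
  have odd_rel (i : ℤ) (hi : Odd i) : x (i - 1) * x (i + 1) = x i + 1 := by
    simpa only [pow_one] using hodd i hi
  exact g2_exchange_eight_steps (hpos 0) (hpos 1)
    (odd_rel 1 (by decide)) (heven 2 (by decide)) (odd_rel 3 (by decide))
    (heven 4 (by decide)) (odd_rel 5 (by decide)) (heven 6 (by decide))
    (odd_rel 7 (by decide)) (heven 8 (by decide))

/-- Every rank-2 positive frieze sequence with exponents `(1,3)` (type `G₂`)
is periodic with period `8`. -/
theorem rank2_frieze_period_eight (x : ℤ → ℝ)
    (hpos : ∀ i : ℤ, 0 < x i)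
    (hodd : ∀ i : ℤ, Odd i → x (i - 1) * x (i + 1) = x i + 1)
    (heven : ∀ i : ℤ, Even i → x (i - 1) * x (i + 1) = x i ^ 3 + 1) :
    ∀ i : ℤ, x (i + 8) = x i := by
  have hx : IsPositiveFrieze 1 3 x := ⟨hpos, by simpa only [pow_one] using hodd, heven⟩
  intro i
  obtain ⟨k, rfl | rfl⟩ := Int.even_or_odd' i
  all_goals
    obtain ⟨h₈, h₉⟩ := (hx.comp_add_even (even_two_mul k)).g2_apply_eight_eq_and_apply_nine_eq
  · convert h₈ using 2 <;> ring
  · convert h₉ using 2 <;> ring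
end

section
/- Let K be the field of rational functions in two variables u, v over ℚ (the fraction field of the polynomial ring ℚ[u,v]). Let b, c be positive integers with b·c ≥ 4, and suppose x : ℤ → K satisfies x(1) = u, x(2) = v, x(i) ≠ 0 for all i ∈ ℤ, and x(i−1)·x(i+1) = x(i)^b + 1 for odd i and x(i−1)·x(i+1) = x(i)^c + 1 for even i. Then x is injective: the cluster variables x(i) are pairwise distinct. (This is the infinite-type half of the rank-2 classification.) -/
/-!
Embed `ℚ(u, v)` into `ℚ(X)((t))` in two ways, `u ↦ t, v ↦ X` and `u ↦ X, v ↦ t`; minus the two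
`t`-adic orders of `x n` form its denominator vector `(P, Q)`. Since `ord (y ^ e + 1) = e • ord y`
when `ord y < 0`, from `n = 3` on the denominator vectors satisfy the linear recurrence
`d (n + 1) = e • d n - d (n - 1)`, whose solutions stay positive because `bc ≥ 4`. Consecutive
vectors have determinant `1`, so their slopes `Q / P` increase strictly and they are pairwise
distinct; all of them satisfy `b Q < 2 P`. Reversing the indices swaps `b` with `c` and `u` with
`v`, so the vectors for `n ≤ 0` are pairwise distinct and satisfy `c P < 2 Q`; as `bc ≥ 4`, no
vector satisfies both. Only `x 1` and `x 2` have a negative coordinate.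
-/

namespace Rank2Cluster

def exchangeExp (b c : ℕ) (i : ℤ) : ℕ := if Even i then c else b

lemma exchangeExp_add_two (b c : ℕ) (i : ℤ) : exchangeExp b c (i + 2) = exchangeExp b c i := by
  simp [exchangeExp, parity_simps]

lemma exchangeExp_mul_exchangeExp_add_one (b c : ℕ) (i : ℤ) :
    exchangeExp b c i * exchangeExp b c (i + 1) = b * c := by
  rcases Int.even_or_odd i with h | h <;> simp [exchangeExp, h, mul_comm]

lemma one_le_exchangeExp {b c : ℕ} (hb : 1 ≤ b) (hc : 1 ≤ c) (i : ℤ) :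
    1 ≤ exchangeExp b c i := by
  unfold exchangeExp
  split_ifs <;> assumption

lemma exchangeExp_three_sub (b c : ℕ) (i : ℤ) :
    exchangeExp b c (3 - i) = exchangeExp c b i := by
  have h3 : ¬Even (3 : ℤ) := by decide
  by_cases h : Even i <;> simp [exchangeExp, Int.even_sub, h, h3]

def IsExchangeSeq {R : Type*} [Semiring R] (b c : ℕ) (x : ℤ → R) : Prop :=
  ∀ i : ℤ, x (i - 1) * x (i + 1) = x i ^ exchangeExp b c i + 1

namespace IsExchangeSeq

variable {b c : ℕ}

lemma map {R S : Type*} [Semiring R] [Semiring S] {x : ℤ → R} (hx : IsExchangeSeq b c x)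
    (φ : R →+* S) : IsExchangeSeq b c (φ ∘ x) := fun i => by
  simp only [Function.comp_apply, ← map_mul, hx i, map_add, map_pow, map_one]

lemma reflect {R : Type*} [CommSemiring R] {x : ℤ → R} (hx : IsExchangeSeq b c x) :
    IsExchangeSeq c b fun i => x (3 - i) := fun i => by
  rw [← exchangeExp_three_sub, ← hx, mul_comm]
  dsimp only
  congr 2 <;> ring

lemma mul_three {R : Type*} [Semiring R] {x : ℤ → R} (hx : IsExchangeSeq b c x) :
    x 1 * x 3 = x 2 ^ c + 1 := by
  simpa [exchangeExp] using hx 2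

lemma mul_four {R : Type*} [Semiring R] {x : ℤ → R} (hx : IsExchangeSeq b c x) :
    x 2 * x 4 = x 3 ^ b + 1 := by
  simpa [exchangeExp, show ¬Even (3 : ℤ) by decide] using hx 3

end IsExchangeSeq

def denomSeq (b c : ℕ) (a₀ a₁ : ℤ) : ℕ → ℤ
  | 0 => a₀
  | 1 => a₁
  | k + 2 => exchangeExp b c k * denomSeq b c a₀ a₁ (k + 1) - denomSeq b c a₀ a₁ k

/- `denomU b c k` and `denomV b c k` will be the exponents of `u` and `v` in the denominator of
`x (k + 3)`. -/
def denomU (b c : ℕ) : ℕ → ℤ := denomSeq b c 1 b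

def denomV (b c : ℕ) : ℕ → ℤ := denomSeq b c 0 1

section Recurrence

variable {b c : ℕ}

@[simp] lemma denomSeq_zero (a₀ a₁ : ℤ) : denomSeq b c a₀ a₁ 0 = a₀ := rfl

@[simp] lemma denomSeq_one (a₀ a₁ : ℤ) : denomSeq b c a₀ a₁ 1 = a₁ := rfl

lemma denomSeq_add_two (a₀ a₁ : ℤ) (k : ℕ) :
    denomSeq b c a₀ a₁ (k + 2) =
      exchangeExp b c k * denomSeq b c a₀ a₁ (k + 1) - denomSeq b c a₀ a₁ k :=
  rfl

lemma casoratian_eq {E f g : ℕ → ℤ} (hf : ∀ k, f (k + 2) = E k * f (k + 1) - f k)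
    (hg : ∀ k, g (k + 2) = E k * g (k + 1) - g k) (k : ℕ) :
    f k * g (k + 1) - g k * f (k + 1) = f 0 * g 1 - g 0 * f 1 := by
  induction k with
  | zero => rfl
  | succ k ih => rw [← ih, hf, hg]; ring

theorem one_le_succ_of_recurrence (hb : 1 ≤ b) (hc : 1 ≤ c) (hbc : 4 ≤ b * c)
    {f : ℕ → ℤ} (hf : ∀ k, f (k + 2) = exchangeExp b c k * f (k + 1) - f k)
    (h₀ : 0 ≤ f 0) (h₁ : 1 ≤ f 1) (h₂ : 2 * f 0 ≤ c * f 1) (h₃ : b * f 0 ≤ 2 * f 1)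
    (k : ℕ) : 1 ≤ f (k + 1) := by
  set E : ℕ → ℤ := fun k => exchangeExp b c k
  have hE (k : ℕ) : 1 ≤ E k := by
    simp only [E]
    exact_mod_cast one_le_exchangeExp hb hc k
  have hEE (k : ℕ) : 4 ≤ E k * E (k + 1) := by
    have := exchangeExp_mul_exchangeExp_add_one b c k
    simp only [E, Nat.cast_add, Nat.cast_one, ← Nat.cast_mul, this]
    exact_mod_cast hbc
  have hE₂ (k : ℕ) : E (k + 2) = E k := by
    simp only [E, Nat.cast_add, Nat.cast_ofNat, exchangeExp_add_two]
  -- one step of the recurrence maps this cone of pairs `(f k, f (k + 1))` into itself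
  have cone (k : ℕ) : 0 ≤ f k ∧ 1 ≤ f (k + 1) ∧ 2 * f k ≤ E k * f (k + 1) ∧
      E (k + 1) * f k ≤ 2 * f (k + 1) := by
    induction k with
    | zero =>
      exact ⟨h₀, h₁, by simpa [E, exchangeExp] using h₂, by simpa [E, exchangeExp] using h₃⟩
    | succ k ih =>
      obtain ⟨i₀, i₁, i₂, i₃⟩ := ih
      have hk := hf k
      have hEk := hE k
      have hEEk := hEE k
      refine ⟨by omega, by nlinarith, by nlinarith, ?_⟩
      rw [hE₂]
      nlinarith
  exact (cone k).2.1

theorem injective_of_casoratian_pos {p q : ℕ → ℤ} (hp : ∀ k, 0 < p k)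
    (h : ∀ k, 0 < p k * q (k + 1) - q k * p (k + 1)) :
    Function.Injective fun k => (p k, q k) := by
  have hmono : StrictMono fun k => (q k : ℚ) / p k := by
    refine strictMono_nat_of_lt_succ fun k => ?_
    rw [div_lt_div_iff₀ (by exact_mod_cast hp k) (by exact_mod_cast hp (k + 1))]
    have := h k
    exact_mod_cast show q k * p (k + 1) < q (k + 1) * p k by linarith
  intro k l hkl
  simp only [Prod.mk.injEq] at hkl
  exact hmono.injective (by simp only [hkl])

variable (hb : 1 ≤ b) (hc : 1 ≤ c) (hbc : 4 ≤ b * c)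
include hb hc hbc

lemma one_le_denomU (k : ℕ) : 1 ≤ denomU b c k := by
  have hbz : (1 : ℤ) ≤ b := by exact_mod_cast hb
  have hbcz : (4 : ℤ) ≤ b * c := by exact_mod_cast hbc
  cases k with
  | zero => rfl
  | succ k =>
    exact one_le_succ_of_recurrence hb hc hbc (denomSeq_add_two 1 b) zero_le_one hbz
      (by simp; linarith) (by simp; linarith) k

lemma one_le_denomV_succ (k : ℕ) : 1 ≤ denomV b c (k + 1) :=
  one_le_succ_of_recurrence hb hc hbc (denomSeq_add_two 0 1) le_rfl le_rfl
    (by simp) (by simp) k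

lemma denomV_nonneg (k : ℕ) : 0 ≤ denomV b c k := by
  cases k with
  | zero => rfl
  | succ k => linarith [one_le_denomV_succ hb hc hbc k]

lemma mul_denomV_lt (k : ℕ) : b * denomV b c k < 2 * denomU b c k := by
  have hbz : (1 : ℤ) ≤ b := by exact_mod_cast hb
  have hbcz : (4 : ℤ) ≤ b * c := by exact_mod_cast hbc
  cases k with
  | zero => simp [denomU, denomV]
  | succ k =>
    have := one_le_succ_of_recurrence hb hc hbc (f := fun k => 2 * denomU b c k - b * denomV b c k)
      (fun k => by simp only [denomU, denomV, denomSeq_add_two]; ring)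
      (by simp [denomU, denomV]) (by simp [denomU, denomV]; linarith)
      (by simp [denomU, denomV]; linarith) (by simp [denomU, denomV]; linarith) k
    linarith

lemma injective_denomU_denomV : Function.Injective fun k => (denomU b c k, denomV b c k) := by
  refine injective_of_casoratian_pos (fun k => one_le_denomU hb hc hbc k) fun k => ?_
  have := casoratian_eq (denomSeq_add_two (b := b) (c := c) 1 b) (denomSeq_add_two 0 1) k
  simp only [denomU, denomV, this, denomSeq_zero, denomSeq_one]
  norm_num

lemma denomU_denomV_ne_swap (k l : ℕ) :
    (denomU b c k, denomV b c k) ≠ (denomV c b l, denomU c b l) := by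
  intro h
  simp only [Prod.mk.injEq] at h
  have hbcz : (4 : ℤ) ≤ b * c := by exact_mod_cast hbc
  have h₁ := mul_denomV_lt hb hc hbc k
  have h₂ := mul_denomV_lt hc hb (by rwa [mul_comm]) l
  have h₃ := one_le_denomU hb hc hbc k
  have h₄ := denomV_nonneg hb hc hbc k
  rw [h.1, h.2] at *
  nlinarith

end Recurrence

lemma eq_one_or_eq_two_or_tail (n : ℤ) :
    n = 1 ∨ n = 2 ∨ (∃ k : ℕ, n = k + 3) ∨ ∃ k : ℕ, n = -k := by
  rcases le_or_gt n 0 with h | h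
  · exact .inr <| .inr <| .inr ⟨(-n).toNat, by omega⟩
  · rcases le_or_gt n 2 with h' | h'
    · omega
    · exact .inr <| .inr <| .inl ⟨(n - 3).toNat, by omega⟩

theorem injective_of_tails {b c : ℕ} (hb : 1 ≤ b) (hc : 1 ≤ c) (hbc : 4 ≤ b * c)
    {D : ℤ → ℤ × ℤ} (h₁ : D 1 = (-1, 0)) (h₂ : D 2 = (0, -1))
    (hR : ∀ k : ℕ, D (k + 3) = (denomU b c k, denomV b c k))
    (hL : ∀ k : ℕ, D (-k) = (denomV c b k, denomU c b k)) : Function.Injective D := by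
  have hcb : 4 ≤ c * b := by rwa [mul_comm]
  have hU := one_le_denomU hb hc hbc
  have hV := denomV_nonneg hb hc hbc
  have hU' := one_le_denomU hc hb hcb
  have hV' := denomV_nonneg hc hb hcb
  intro i j hij
  rcases eq_one_or_eq_two_or_tail i with rfl | rfl | ⟨k, rfl⟩ | ⟨k, rfl⟩ <;>
    rcases eq_one_or_eq_two_or_tail j with rfl | rfl | ⟨l, rfl⟩ | ⟨l, rfl⟩ <;>
    simp only [h₁, h₂, hR, hL, Prod.mk.injEq] at hij
  · rfl
  · norm_num at hij
  · linarith [hij.1, hU l]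
  · linarith [hij.1, hV' l]
  · norm_num at hij
  · rfl
  · linarith [hij.2, hV l]
  · linarith [hij.2, hU' l]
  · linarith [hij.1, hU k]
  · linarith [hij.2, hV k]
  · rw [injective_denomU_denomV hb hc hbc (Prod.ext hij.1 hij.2)]
  · exact absurd (Prod.ext hij.1 hij.2) (denomU_denomV_ne_swap hb hc hbc k l)
  · linarith [hij.1, hV' k]
  · linarith [hij.2, hU' k]
  · exact absurd (Prod.ext hij.1 hij.2).symm (denomU_denomV_ne_swap hb hc hbc l k)
  · rw [injective_denomU_denomV hc hb hcb (Prod.ext hij.2 hij.1)]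

section Order

open HahnSeries

variable {F : Type*} [Field F]

lemma order_add_eq_left {f g : HahnSeries ℤ F} (hf : f ≠ 0) (hg : g ≠ 0)
    (h : f.order < g.order) :
    (f + g).order = f.order ∧ (f + g).leadingCoeff = f.leadingCoeff := by
  have hlt : f.orderTop < g.orderTop := by
    rw [← order_eq_orderTop_of_ne_zero hf, ← order_eq_orderTop_of_ne_zero hg]
    exact_mod_cast h
  have hfg : f + g ≠ 0 :=
    orderTop_ne_top.1 ((orderTop_add_eq_left hlt).trans_ne (orderTop_ne_top.2 hf))
  refine ⟨WithTop.coe_injective ?_, leadingCoeff_add_eq_left hlt⟩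
  rw [order_eq_orderTop_of_ne_zero hfg, order_eq_orderTop_of_ne_zero hf, orderTop_add_eq_left hlt]

lemma order_pow_add_one_of_order_neg {f : HahnSeries ℤ F} (hf : f.order < 0) {n : ℕ}
    (hn : 0 < n) : (f ^ n + 1).order = n * f.order := by
  have hf0 : f ≠ 0 := by rintro rfl; simp at hf
  rw [(order_add_eq_left (pow_ne_zero n hf0) one_ne_zero (by simp; nlinarith)).1]
  simp

lemma order_pow_add_one_of_order_pos {f : HahnSeries ℤ F} (hf : 0 < f.order) {n : ℕ}
    (hn : 0 < n) : (f ^ n + 1).order = 0 ∧ (f ^ n + 1).leadingCoeff = 1 := by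
  have hf0 : f ≠ 0 := by rintro rfl; simp at hf
  rw [add_comm]
  simpa using order_add_eq_left one_ne_zero (pow_ne_zero n hf0) (by simp; positivity)

lemma order_pow_add_one_of_order_eq_zero {f : HahnSeries ℤ F} (hf : f.order = 0) {n : ℕ}
    (hn : f.leadingCoeff ^ n + 1 ≠ 0) : (f ^ n + 1).order = 0 := by
  have hpow (m : ℕ) : (f ^ m).leadingCoeff = f.leadingCoeff ^ m := by
    induction m <;> simp [pow_succ, *]
  have hcoeff : (f ^ n + 1).coeff 0 = f.leadingCoeff ^ n + 1 := by
    rw [coeff_add, coeff_one, if_pos rfl, ← hpow n, leadingCoeff_eq, order_pow, hf, smul_zero]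
  have hne : f ^ n + 1 ≠ 0 := ne_zero_of_coeff_ne_zero (hcoeff ▸ hn)
  refine le_antisymm (order_le_of_coeff_ne_zero (hcoeff ▸ hn)) ?_
  simpa [hf] using min_order_le_order_add hne

namespace IsExchangeSeq

variable {b c : ℕ} {z : ℤ → HahnSeries ℤ F} (hb : 1 ≤ b) (hc : 1 ≤ c)
include hb hc

theorem order_tail_eq (hz : IsExchangeSeq b c z) (hz0 : ∀ i, z i ≠ 0) {a : ℕ → ℤ}
    (ha : ∀ k, a (k + 2) = exchangeExp b c k * a (k + 1) - a k) (ha_pos : ∀ k, 1 ≤ a (k + 1))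
    (h₀ : (z 3).order = -a 0) (h₁ : (z 4).order = -a 1) (k : ℕ) :
    (z (k + 3)).order = -a k := by
  induction k using Nat.twoStepInduction with
  | zero => simpa using h₀
  | one => simpa [show (1 : ℤ) + 3 = 4 by norm_num] using h₁
  | more k ih₀ ih₁ =>
    have hrel := hz (k + 2 + 2)
    rw [exchangeExp_add_two, exchangeExp_add_two, show (k : ℤ) + 2 + 2 - 1 = k + 3 by ring,
      show (k : ℤ) + 2 + 2 + 1 = (k + 2 : ℕ) + 3 by push_cast; ring,
      show (k : ℤ) + 2 + 2 = (k + 1 : ℕ) + 3 by push_cast; ring] at hrel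
    have h := congrArg order hrel
    rw [order_mul (hz0 _) (hz0 _), order_pow_add_one_of_order_neg (by linarith [ha_pos k])
      (one_le_exchangeExp hb hc k), ih₀, ih₁] at h
    rw [ha]
    linarith

variable (hbc : 4 ≤ b * c) (hz : IsExchangeSeq b c z) (hz0 : ∀ i, z i ≠ 0)
include hbc hz hz0

theorem order_tail_eq_neg_denomU (h₁ : (z 1).order = 1) (h₂ : (z 2).order = 0)
    (h₂' : (z 2).leadingCoeff ^ c + 1 ≠ 0) (k : ℕ) : (z (k + 3)).order = -denomU b c k := by
  have h₃ : (z 3).order = -1 := by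
    have h := congrArg order hz.mul_three
    rw [order_mul (hz0 1) (hz0 3), order_pow_add_one_of_order_eq_zero h₂ h₂', h₁] at h
    linarith
  have h₄ : (z 4).order = -b := by
    have h := congrArg order hz.mul_four
    rw [order_mul (hz0 2) (hz0 4), order_pow_add_one_of_order_neg (by rw [h₃]; norm_num) hb,
      h₂, h₃] at h
    linarith
  exact hz.order_tail_eq hb hc hz0 (denomSeq_add_two 1 b)
    (fun k => one_le_denomU hb hc hbc (k + 1)) h₃ h₄ k

theorem order_tail_eq_neg_denomV (h₁ : (z 1).order = 0) (h₁' : (z 1).leadingCoeff ^ b + 1 ≠ 0)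
    (h₂ : (z 2).order = 1) (k : ℕ) : (z (k + 3)).order = -denomV b c k := by
  obtain ⟨hord, hlc⟩ := order_pow_add_one_of_order_pos (f := z 2) (by rw [h₂]; norm_num) hc
  have h₃ : (z 3).order = 0 := by
    have h := congrArg order hz.mul_three
    rw [order_mul (hz0 1) (hz0 3), hord, h₁] at h
    linarith
  have hlc₃ : (z 1).leadingCoeff * (z 3).leadingCoeff = 1 := by
    rw [← leadingCoeff_mul, hz.mul_three, hlc]
  have hlc₃' : (z 3).leadingCoeff ^ b + 1 ≠ 0 := by
    intro h
    apply h₁'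
    have hpow : (z 1).leadingCoeff ^ b * (z 3).leadingCoeff ^ b = 1 := by
      rw [← mul_pow, hlc₃, one_pow]
    linear_combination (z 1).leadingCoeff ^ b * h - hpow
  have h₄ : (z 4).order = -1 := by
    have h := congrArg order hz.mul_four
    rw [order_mul (hz0 2) (hz0 4), order_pow_add_one_of_order_eq_zero h₃ hlc₃', h₂] at h
    linarith
  exact hz.order_tail_eq hb hc hz0 (denomSeq_add_two 0 1)
    (fun k => one_le_denomV_succ hb hc hbc k) (by simpa [denomV] using h₃) h₄ k

end IsExchangeSeq

end Order

lemma ratFunc_X_pow_add_one_ne_zero {K : Type*} [Field K] {n : ℕ} (hn : 0 < n) :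
    (RatFunc.X : RatFunc K) ^ n + 1 ≠ 0 := by
  rw [← RatFunc.algebraMap_X, ← map_pow, ← map_one (algebraMap (Polynomial K) _), ← map_add,
    ← Polynomial.C_1]
  exact (map_ne_zero_iff _ (IsFractionRing.injective _ _)).2 (Polynomial.X_pow_add_C_ne_zero hn 1)

section Embedding

open MvPolynomial

/-- `ℚ[u, v] → ℚ(X)((t))`, `u ↦ t`, `v ↦ X`. -/
noncomputable def toLaurentSeries : MvPolynomial (Fin 2) ℚ →+* LaurentSeries (RatFunc ℚ) :=
  ((algebraMap (Polynomial (RatFunc ℚ)) _).comp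
    (Polynomial.mapRingHom (algebraMap (Polynomial ℚ) (RatFunc ℚ)))).comp
  ((finSuccEquiv ℚ 1).toRingEquiv.trans
    (Polynomial.mapEquiv (uniqueAlgEquiv ℚ (Fin 1)).toRingEquiv)).toRingHom

lemma toLaurentSeries_injective : Function.Injective toLaurentSeries :=
  ((Polynomial.algebraMap_hahnSeries_injective ℤ).comp
    (Polynomial.map_injective _ (IsFractionRing.injective (Polynomial ℚ) (RatFunc ℚ)))).comp
    (RingEquiv.injective _)

lemma toLaurentSeries_X (i : Fin 2) :
    toLaurentSeries (X i) = ![HahnSeries.single 1 1, HahnSeries.C RatFunc.X] i := by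
  fin_cases i
  · simp [toLaurentSeries, finSuccEquiv_X_zero]
  · simp [toLaurentSeries, show (X 1 : MvPolynomial (Fin 2) ℚ) = X (Fin.succ 0) from rfl,
      finSuccEquiv_X_succ]

theorem exists_ringHom_laurentSeries {i j : Fin 2} (hij : i ≠ j) :
    ∃ Φ : FractionRing (MvPolynomial (Fin 2) ℚ) →+* LaurentSeries (RatFunc ℚ),
      (Φ (algebraMap (MvPolynomial (Fin 2) ℚ) _ (X i))).order = 1 ∧
      (Φ (algebraMap (MvPolynomial (Fin 2) ℚ) _ (X j))).order = 0 ∧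
      ∀ n, 0 < n → (Φ (algebraMap (MvPolynomial (Fin 2) ℚ) _ (X j))).leadingCoeff ^ n + 1 ≠ 0 := by
  obtain ⟨σ, hσi, hσj⟩ : ∃ σ : Equiv.Perm (Fin 2), σ i = 0 ∧ σ j = 1 := by
    revert i j; decide
  refine ⟨IsFractionRing.lift (g := toLaurentSeries.comp (rename σ).toRingHom)
    (toLaurentSeries_injective.comp (rename_injective σ σ.injective)), ?_⟩
  simp only [IsFractionRing.lift_algebraMap, RingHom.comp_apply, AlgHom.toRingHom_eq_coe,
    RingHom.coe_coe, rename_X, toLaurentSeries_X, hσi, hσj, Matrix.cons_val_zero,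
    Matrix.cons_val_one]
  refine ⟨HahnSeries.order_single one_ne_zero, HahnSeries.order_C, fun n hn => ?_⟩
  simpa [HahnSeries.C_apply] using ratFunc_X_pow_add_one_ne_zero hn

end Embedding

end Rank2Cluster

open Rank2Cluster in
/-- In the rank-2 cluster algebra with exchange matrix `[[0,b],[-c,0]]` with
`b·c ≥ 4`, realized in the field `ℚ(u,v)` of rational functions in two
variables, the cluster variables `x i` are pairwise distinct (infinite type). -/
theorem rank2_cluster_variables_injective_of_four_le
    (b c : ℕ) (hb : 1 ≤ b) (hc : 1 ≤ c) (hbc : 4 ≤ b * c)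
    (x : ℤ → FractionRing (MvPolynomial (Fin 2) ℚ))
    (hx1 : x 1 = algebraMap (MvPolynomial (Fin 2) ℚ)
      (FractionRing (MvPolynomial (Fin 2) ℚ)) (MvPolynomial.X 0))
    (hx2 : x 2 = algebraMap (MvPolynomial (Fin 2) ℚ)
      (FractionRing (MvPolynomial (Fin 2) ℚ)) (MvPolynomial.X 1))
    (hne : ∀ i : ℤ, x i ≠ 0)
    (hodd : ∀ i : ℤ, Odd i → x (i - 1) * x (i + 1) = x i ^ b + 1)
    (heven : ∀ i : ℤ, Even i → x (i - 1) * x (i + 1) = x i ^ c + 1) :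
    Function.Injective x := by
  have hx : IsExchangeSeq b c x := fun i => by
    rcases Int.even_or_odd i with h | h
    · simpa [exchangeExp, h] using heven i h
    · simpa [exchangeExp, Int.not_even_iff_odd.2 h] using hodd i h
  obtain ⟨Φ, hΦ₁, hΦ₂, hΦ₂'⟩ := exists_ringHom_laurentSeries (zero_ne_one : (0 : Fin 2) ≠ 1)
  obtain ⟨Ψ, hΨ₂, hΨ₁, hΨ₁'⟩ := exists_ringHom_laurentSeries (one_ne_zero : (1 : Fin 2) ≠ 0)
  rw [← hx1] at hΦ₁ hΨ₁ hΨ₁'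
  rw [← hx2] at hΦ₂ hΦ₂' hΨ₂
  have hΦx (i : ℤ) : Φ (x i) ≠ 0 := (map_ne_zero Φ).2 (hne i)
  have hΨx (i : ℤ) : Ψ (x i) ≠ 0 := (map_ne_zero Ψ).2 (hne i)
  have hcb : 4 ≤ c * b := by rwa [mul_comm]
  refine Function.Injective.of_comp (f := fun y => (-(Φ y).order, -(Ψ y).order))
    (injective_of_tails hb hc hbc ?_ ?_ (fun k => ?_) (fun k => ?_))
  · simp only [Function.comp_apply, hΦ₁, hΨ₁, neg_zero]
  · simp only [Function.comp_apply, hΦ₂, hΨ₂, neg_zero]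
  · simp only [Function.comp_apply, Prod.mk.injEq, neg_eq_iff_eq_neg]
    exact ⟨(hx.map Φ).order_tail_eq_neg_denomU hb hc hbc hΦx hΦ₁ hΦ₂ (hΦ₂' c hc) k,
      (hx.map Ψ).order_tail_eq_neg_denomV hb hc hbc hΨx hΨ₁ (hΨ₁' b hb) hΨ₂ k⟩
  · simp only [Function.comp_apply, Prod.mk.injEq, neg_eq_iff_eq_neg,
      ← show (3 : ℤ) - (k + 3) = -k by ring]
    exact ⟨(hx.reflect.map Φ).order_tail_eq_neg_denomV hc hb hcb (fun _ => hΦx _) hΦ₂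
        (hΦ₂' c hc) hΦ₁ k,
      (hx.reflect.map Ψ).order_tail_eq_neg_denomU hc hb hcb (fun _ => hΨx _) hΨ₂ hΨ₁
        (hΨ₁' b hb) k⟩
end

section
/- The set of pairs (a, b) of positive integers such that a divides b³ + 1, a·b divides a + b³ + 1, a²·b³ divides b⁶ + 3ab³ + 2b³ + a³ + 3a² + 3a + 1, a·b² divides b³ + a² + 2a + 1, a·b³ divides a³ + b³ + 3a² + 3a + 1, and b divides a + 1 is exactly the nine-element set {(1,1), (1,2), (9,2), (14,3), (14,5), (9,5), (2,3), (2,1), (3,2)}. Equivalently, there are exactly 9 frieze points of the G₂ cluster algebra, i.e. exactly 9 positive integral friezes of type G₂. -/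
lemma G2_bnd (a b k : ℕ) (hb : 2 ≤ b) (hk : 2 ≤ k) (ha : a + 1 = b * k)
    (h1 : a ≤ b + k ^ 2) (h2 : a ≤ k + b ^ 2)
    (h3 : a ^ 2 ≤ b ^ 3 + k ^ 3 + 3 * a + 2) : b ≤ 5 := by
  by_contra h
  push_neg at h
  have hb6 : (6 : ℤ) ≤ (b : ℤ) := by exact_mod_cast h
  have hk2 : (2 : ℤ) ≤ (k : ℤ) := by exact_mod_cast hk
  have ha' : (a : ℤ) + 1 = (b : ℤ) * k := by exact_mod_cast ha
  have h1' : (a : ℤ) ≤ (b : ℤ) + (k : ℤ) ^ 2 := by exact_mod_cast h1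
  have h2' : (a : ℤ) ≤ (k : ℤ) + (b : ℤ) ^ 2 := by exact_mod_cast h2
  have h3' : (a : ℤ) ^ 2 ≤ (b : ℤ) ^ 3 + (k : ℤ) ^ 3 + 3 * a + 2 := by exact_mod_cast h3
  set B := (b : ℤ); set K := (k : ℤ); set A := (a : ℤ)
  have hkb : K ≤ B + 2 := by nlinarith
  have hbk : B ≤ K + 2 := by nlinarith
  nlinarith [sq_nonneg (B - K), mul_pos (by linarith : (0:ℤ) < B) (by linarith : (0:ℤ) < K),
    mul_nonneg (mul_nonneg (by linarith : (0:ℤ) ≤ B - 6) (by linarith : (0:ℤ) ≤ K)) (by linarith : (0:ℤ) ≤ K),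
    mul_nonneg (by linarith : (0:ℤ) ≤ K - 2) (by linarith : (0:ℤ) ≤ B),
    mul_nonneg (mul_nonneg (by linarith : (0:ℤ) ≤ B - K + 2) (by linarith : (0:ℤ) ≤ K - B + 2)) (mul_nonneg (by linarith : (0:ℤ) ≤ B) (by linarith : (0:ℤ) ≤ K))]

set_option synthInstance.maxSize 10000 in
set_option maxHeartbeats 1000000 in
lemma G2_enum : ∀ a < 31, ∀ b < 6,
    (1 ≤ a ∧ 1 ≤ b ∧
      a ∣ b ^ 3 + 1 ∧
      a * b ∣ a + b ^ 3 + 1 ∧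
      a ^ 2 * b ^ 3 ∣ b ^ 6 + 3 * a * b ^ 3 + 2 * b ^ 3 + a ^ 3 + 3 * a ^ 2 + 3 * a + 1 ∧
      a * b ^ 2 ∣ b ^ 3 + a ^ 2 + 2 * a + 1 ∧
      a * b ^ 3 ∣ a ^ 3 + b ^ 3 + 3 * a ^ 2 + 3 * a + 1 ∧
      b ∣ a + 1) →
    (a = 1 ∧ b = 1) ∨ (a = 1 ∧ b = 2) ∨ (a = 9 ∧ b = 2) ∨ (a = 14 ∧ b = 3) ∨
      (a = 14 ∧ b = 5) ∨ (a = 9 ∧ b = 5) ∨ (a = 2 ∧ b = 3) ∨ (a = 2 ∧ b = 1) ∨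
      (a = 3 ∧ b = 2) := by decide

/-- There are exactly nine frieze points of the `G₂` cluster algebra: the
pairs `(a,b)` of positive integers satisfying the six divisibility
conditions coming from the eight cluster variables are exactly
`(1,1), (1,2), (9,2), (14,3), (14,5), (9,5), (2,3), (2,1), (3,2)`. -/
theorem G2_frieze_points :
    {p : ℕ × ℕ | 1 ≤ p.1 ∧ 1 ≤ p.2 ∧
        p.1 ∣ p.2 ^ 3 + 1 ∧
        p.1 * p.2 ∣ p.1 + p.2 ^ 3 + 1 ∧
        p.1 ^ 2 * p.2 ^ 3 ∣
          p.2 ^ 6 + 3 * p.1 * p.2 ^ 3 + 2 * p.2 ^ 3 + p.1 ^ 3 +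
            3 * p.1 ^ 2 + 3 * p.1 + 1 ∧
        p.1 * p.2 ^ 2 ∣ p.2 ^ 3 + p.1 ^ 2 + 2 * p.1 + 1 ∧
        p.1 * p.2 ^ 3 ∣ p.1 ^ 3 + p.2 ^ 3 + 3 * p.1 ^ 2 + 3 * p.1 + 1 ∧
        p.2 ∣ p.1 + 1} =
      {(1, 1), (1, 2), (9, 2), (14, 3), (14, 5), (9, 5), (2, 3), (2, 1),
        (3, 2)} := by
  ext ⟨a, b⟩
  simp only [Set.mem_setOf_eq, Set.mem_insert_iff, Set.mem_singleton_iff, Prod.mk.injEq]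
  constructor
  · rintro ⟨ha, hb, h1, h2, h3, h4, h5, h6⟩
    obtain ⟨k, hbk⟩ := h6
    have hk1 : 1 ≤ k := Nat.pos_of_ne_zero (by rintro rfl; simp at hbk)
    have hb0 : 0 < b := hb
    -- derived divisibilities
    have e1 : b ^ 3 + a ^ 2 + 2 * a + 1 = (b + k ^ 2) * b ^ 2 := by
      calc b ^ 3 + a ^ 2 + 2 * a + 1 = b ^ 3 + (a + 1) ^ 2 := by ring
        _ = b ^ 3 + (b * k) ^ 2 := by rw [hbk]
        _ = (b + k ^ 2) * b ^ 2 := by ring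
    have d1 : a ∣ b + k ^ 2 := by
      have := e1 ▸ h4
      exact (Nat.mul_dvd_mul_iff_right (pow_pos hb0 2)).mp this
    have e2 : a + b ^ 3 + 1 = (k + b ^ 2) * b := by
      calc a + b ^ 3 + 1 = (a + 1) + b ^ 3 := by ring
        _ = b * k + b ^ 3 := by rw [hbk]
        _ = (k + b ^ 2) * b := by ring
    have d4 : a ∣ k + b ^ 2 := by
      have := e2 ▸ h2
      exact (Nat.mul_dvd_mul_iff_right hb0).mp this
    have e3 : b ^ 6 + 3 * a * b ^ 3 + 2 * b ^ 3 + a ^ 3 + 3 * a ^ 2 + 3 * a + 1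
        = (b ^ 3 + k ^ 3 + 3 * a + 2) * b ^ 3 := by
      calc b ^ 6 + 3 * a * b ^ 3 + 2 * b ^ 3 + a ^ 3 + 3 * a ^ 2 + 3 * a + 1
          = b ^ 6 + 3 * a * b ^ 3 + 2 * b ^ 3 + (a + 1) ^ 3 := by ring
        _ = b ^ 6 + 3 * a * b ^ 3 + 2 * b ^ 3 + (b * k) ^ 3 := by rw [hbk]
        _ = (b ^ 3 + k ^ 3 + 3 * a + 2) * b ^ 3 := by ring
    have d2 : a ^ 2 ∣ b ^ 3 + k ^ 3 + 3 * a + 2 := by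
      have := e3 ▸ h3
      exact (Nat.mul_dvd_mul_iff_right (pow_pos hb0 3)).mp this
    -- inequalities
    have l1 : a ≤ b + k ^ 2 := Nat.le_of_dvd (by positivity) d1
    have l4 : a ≤ k + b ^ 2 := Nat.le_of_dvd (by positivity) d4
    have l2 : a ^ 2 ≤ b ^ 3 + k ^ 3 + 3 * a + 2 := Nat.le_of_dvd (by positivity) d2
    have la2 : a ≤ a ^ 2 := Nat.le_self_pow two_ne_zero a
    -- bounds
    have key : b ≤ 5 ∧ a ≤ 30 := by
      rcases Nat.lt_or_ge k 2 with hk2 | hk2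
      · -- k = 1 : a ∣ b + 1 = a + 2, so a ∣ 2
        have hk : k = 1 := by omega
        subst hk
        have hb' : b = a + 1 := by omega
        rw [hb', show a + 1 + 1 ^ 2 = a + 2 by ring] at d1
        have : a ∣ 2 := (Nat.dvd_add_right (dvd_refl a)).mp d1
        have := Nat.le_of_dvd (by norm_num) this
        omega
      · rcases Nat.lt_or_ge b 2 with hb2 | hb2
        · -- b = 1 : a ∣ k + 1 = a + 2, so a ∣ 2
          have hb' : b = 1 := by omega
          subst hb'
          have hk' : k = a + 1 := by omega
          rw [hk', show a + 1 + 1 ^ 2 = a + 2 by ring] at d4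
          have : a ∣ 2 := (Nat.dvd_add_right (dvd_refl a)).mp d4
          have := Nat.le_of_dvd (by norm_num) this
          omega
        · have hB : b ≤ 5 := G2_bnd a b k hb2 hk2 hbk l1 l4 l2
          have hK : k ≤ 5 := by
            refine G2_bnd a k b hk2 hb2 (by rw [hbk, mul_comm]) l4 l1 ?_
            calc a ^ 2 ≤ b ^ 3 + k ^ 3 + 3 * a + 2 := l2
              _ = k ^ 3 + b ^ 3 + 3 * a + 2 := by ring
          have : b * k ≤ 25 := Nat.mul_le_mul hB hK
          omega
    exact G2_enum a (by omega) b (by omega) ⟨ha, hb, h1, h2, h3, h4, h5, ⟨k, hbk⟩⟩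
  · rintro (⟨rfl, rfl⟩ | ⟨rfl, rfl⟩ | ⟨rfl, rfl⟩ | ⟨rfl, rfl⟩ | ⟨rfl, rfl⟩ |
      ⟨rfl, rfl⟩ | ⟨rfl, rfl⟩ | ⟨rfl, rfl⟩ | ⟨rfl, rfl⟩) <;> refine ⟨?_, ?_, ?_, ?_, ?_, ?_, ?_, ?_⟩ <;> decide
end

section
/- The subset S = {(a, b) ∈ ℝ² : 1 ≤ a, 1 ≤ b, a ≤ b + 1, b ≤ a + 1, a·b ≤ a + b + 1} of the plane (with its subspace topology) is homeomorphic to the closed unit disc, i.e. to the closed ball of radius 1 centered at the origin in two-dimensional Euclidean space. (The superunitary region of the A₂ cluster algebra is a topological pentagon, homeomorphic to the A₂ generalized associahedron.) -/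
open Set Metric

noncomputable section A2aux

private def A2g (d : ℝ) : ℝ := Real.sqrt (8 + d ^ 2)

private lemma A2g_gt (d : ℝ) : |d| < A2g d := by
  have h : |d| = Real.sqrt (d ^ 2) := (Real.sqrt_sq_eq_abs d).symm
  rw [h, A2g]
  exact Real.sqrt_lt_sqrt (sq_nonneg d) (by linarith)

private lemma A2g_sub_pos (d : ℝ) : 0 < A2g d - |d| := sub_pos.mpr (A2g_gt d)

private lemma A2g_cont : Continuous A2g :=
  Real.continuous_sqrt.comp (by continuity)

/-- Fiberwise affine homeomorphism straightening the region between graphs. -/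
private def A2psi : ℝ × ℝ ≃ₜ ℝ × ℝ where
  toFun p := (p.1, (p.2 - |p.1|) / (A2g p.1 - |p.1|))
  invFun q := (q.1, q.2 * (A2g q.1 - |q.1|) + |q.1|)
  left_inv p := by
    have h := (A2g_sub_pos p.1).ne'
    simp only
    rw [div_mul_cancel₀ _ h]
    simp
  right_inv q := by
    have h := (A2g_sub_pos q.1).ne'
    simp only
    rw [add_sub_cancel_right, mul_div_cancel_right₀ _ h]
  continuous_toFun := by
    refine continuous_fst.prodMk (Continuous.div ?_ ?_ ?_)
    · exact continuous_snd.sub (continuous_abs.comp continuous_fst)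
    · exact (A2g_cont.comp continuous_fst).sub (continuous_abs.comp continuous_fst)
    · intro p; exact (A2g_sub_pos p.1).ne'
  continuous_invFun := by
    refine continuous_fst.prodMk ?_
    exact (continuous_snd.mul ((A2g_cont.comp continuous_fst).sub
      (continuous_abs.comp continuous_fst))).add (continuous_abs.comp continuous_fst)

/-- Affine change to difference/sum coordinates. -/
private def A2aff : ℝ × ℝ ≃ₜ ℝ × ℝ where
  toFun p := (p.1 - p.2, p.1 + p.2 - 2)
  invFun q := ((q.1 + q.2 + 2) / 2, (q.2 - q.1 + 2) / 2)
  left_inv := fun ⟨x, y⟩ => by simp only [Prod.mk.injEq]; constructor <;> ring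
  right_inv := fun ⟨x, y⟩ => by simp only [Prod.mk.injEq]; constructor <;> ring
  continuous_toFun := by continuity
  continuous_invFun := by continuity

end A2aux

private lemma A2key :
    (A2aff.trans A2psi) '' {p : ℝ × ℝ | 1 ≤ p.1 ∧ 1 ≤ p.2 ∧ p.1 ≤ p.2 + 1 ∧ p.2 ≤ p.1 + 1 ∧
      p.1 * p.2 ≤ p.1 + p.2 + 1} = Icc (-1 : ℝ) 1 ×ˢ Icc (0 : ℝ) 1 := by
  have hpre : {p : ℝ × ℝ | 1 ≤ p.1 ∧ 1 ≤ p.2 ∧ p.1 ≤ p.2 + 1 ∧ p.2 ≤ p.1 + 1 ∧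
      p.1 * p.2 ≤ p.1 + p.2 + 1} = (A2aff.trans A2psi) ⁻¹' (Icc (-1 : ℝ) 1 ×ˢ Icc (0 : ℝ) 1) := by
    ext ⟨a, b⟩
    have hD := A2g_sub_pos (a - b)
    simp only [mem_setOf_eq, Set.mem_preimage, Homeomorph.trans_apply, A2aff, A2psi,
      Homeomorph.homeomorph_mk_coe, Equiv.coe_fn_mk, Set.mem_prod, mem_Icc]
    rw [div_nonneg_iff, div_le_one hD]
    constructor
    · rintro ⟨ha, hb, hab1, hab2, habm⟩
      have habs : |a - b| ≤ a + b - 2 := by rw [abs_le]; constructor <;> linarith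
      have hs0 : (0:ℝ) ≤ a + b - 2 := le_trans (abs_nonneg _) habs
      have hsq : (a + b - 2) ^ 2 ≤ 8 + (a - b) ^ 2 := by nlinarith
      have hsg : a + b - 2 ≤ A2g (a - b) := by
        calc a + b - 2 = Real.sqrt ((a + b - 2) ^ 2) := (Real.sqrt_sq hs0).symm
          _ ≤ _ := Real.sqrt_le_sqrt hsq
      exact ⟨⟨by linarith, by linarith⟩, Or.inl ⟨sub_nonneg.mpr habs, hD.le⟩, by linarith⟩
    · rintro ⟨⟨hd1, hd2⟩, hnum, hle⟩
      have habs : |a - b| ≤ a + b - 2 := by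
        rcases hnum with ⟨h1, _⟩ | ⟨_, h2⟩
        · linarith
        · linarith
      have h1 : -(a + b - 2) ≤ a - b := neg_le_of_abs_le habs
      have h2 : a - b ≤ a + b - 2 := le_of_abs_le habs
      have hs0 : (0:ℝ) ≤ a + b - 2 := le_trans (abs_nonneg _) habs
      have hsg : a + b - 2 ≤ A2g (a - b) := by linarith
      have hsqt := Real.sq_sqrt (show (0:ℝ) ≤ 8 + (a - b) ^ 2 by positivity)
      have hsq : (a + b - 2) ^ 2 ≤ 8 + (a - b) ^ 2 := by
        calc (a + b - 2) ^ 2 ≤ (A2g (a - b)) ^ 2 := pow_le_pow_left₀ hs0 hsg 2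
          _ = 8 + (a - b) ^ 2 := by rw [A2g, hsqt]
      refine ⟨by linarith, by linarith, by linarith, by linarith, by nlinarith⟩
  rw [hpre, Set.image_preimage_eq _ (A2aff.trans A2psi).surjective]

/-- The superunitary region of the `A₂` cluster algebra, embedded in the
plane via the initial cluster, is homeomorphic to the closed unit disc. -/
theorem A2_superunitary_region_homeomorph_closed_disc :
    Nonempty (
      ({p : ℝ × ℝ | 1 ≤ p.1 ∧ 1 ≤ p.2 ∧ p.1 ≤ p.2 + 1 ∧ p.2 ≤ p.1 + 1 ∧
          p.1 * p.2 ≤ p.1 + p.2 + 1} : Set (ℝ × ℝ)) ≃ₜ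
        (Metric.closedBall (0 : EuclideanSpace ℝ (Fin 2)) 1)) := by
  set E := EuclideanSpace ℝ (Fin 2)
  set Rect : Set (ℝ × ℝ) := Icc (-1 : ℝ) 1 ×ˢ Icc (0 : ℝ) 1 with hRect
  let L : (ℝ × ℝ) ≃L[ℝ] E :=
    (ContinuousLinearEquiv.finTwoArrow ℝ ℝ).symm.trans (EuclideanSpace.equiv (Fin 2) ℝ).symm
  set K : Set E := ⇑L '' Rect with hK
  have hRectConv : Convex ℝ Rect := (convex_Icc _ _).prod (convex_Icc _ _)
  have hRectCompact : IsCompact Rect := isCompact_Icc.prod isCompact_Icc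
  have hKconv : Convex ℝ K := by
    have := hRectConv.linear_image (L.toLinearEquiv.toLinearMap)
    exact this
  have hKcompact : IsCompact K := hRectCompact.image L.continuous
  have hKint : (interior K).Nonempty := by
    have h1 : K = ⇑L.toHomeomorph '' Rect := rfl
    rw [h1, ← Homeomorph.image_interior]
    refine ⟨L.toHomeomorph (0, 1 / 2), Set.mem_image_of_mem _ ?_⟩
    rw [interior_prod_eq, interior_Icc, interior_Icc]
    constructor <;> constructor <;> norm_num
  obtain ⟨e, -, he, -⟩ := exists_homeomorph_image_eq hKconv hKint
    (NormedSpace.isVonNBounded_of_isBounded _ hKcompact.isBounded)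
    (convex_closedBall (0 : E) 1)
    (by
      rw [interior_closedBall (0 : E) one_ne_zero]
      exact ⟨0, mem_ball_self one_pos⟩)
    (NormedSpace.isVonNBounded_of_isBounded _ isBounded_closedBall)
  rw [hKcompact.isClosed.closure_eq, Metric.isClosed_closedBall.closure_eq] at he
  exact ⟨(Homeomorph.image (A2aff.trans A2psi) _).trans <|
    (Homeomorph.setCongr A2key).trans <|
    (Homeomorph.image L.toHomeomorph Rect).trans <|
    (Homeomorph.image e K).trans (Homeomorph.setCongr he)⟩
end

section
/- The subset S = {(a, b) ∈ ℝ² : 1 ≤ a, 1 ≤ b, a ≤ b² + 1, a·b ≤ a + b² + 1, a·b² ≤ a² + b² + 2a + 1, b ≤ a + 1} of the plane (with its subspace topology) is homeomorphic to the closed unit disc, i.e. to the closed ball of radius 1 centered at the origin in two-dimensional Euclidean space. (The superunitary region of the B₂/C₂ cluster algebra is a topological hexagon, homeomorphic to the B₂ generalized associahedron.) -/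
/-!
The region `S` is compact and strictly star-shaped about `(2, 2)`: the half-open segment from
`(2, 2)` to any point of `S` lies in the interior of `S`. It is not convex (the edge
`a = b ^ 2 + 1` bends inwards), but strict star-shapedness already makes the Minkowski gauge of
`S - (2, 2)` continuous. Rescaling every ray from the centre by the ratio of this gauge to the
norm is then a homeomorphism of the plane carrying `S - (2, 2)` onto the closed unit disc, with
inverse the rescaling by the reciprocal ratio.
-/

open Set Metric Filter Topology Pointwise Bornology

section StrictlyStarShaped

variable {E : Type*} [AddCommGroup E] [Module ℝ E]

theorem StarConvex.setOfPred_gauge_lt_one_subset {s : Set E} (hs : StarConvex ℝ 0 s)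
    (ha : Absorbent ℝ s) : {x | gauge s x < 1} ⊆ s := fun _ hx ↦
  let ⟨_, hy, hxy⟩ := mem_openSegment_of_gauge_lt_one ha hx
  hs.openSegment_subset hy hxy

variable [TopologicalSpace E]

def IsStrictlyStarShaped (s : Set E) : Prop :=
  ∀ x ∈ s, ∀ t ∈ Ico (0 : ℝ) 1, t • x ∈ interior s

namespace IsStrictlyStarShaped

variable {s : Set E}

theorem starConvex (hs : IsStrictlyStarShaped s) : StarConvex ℝ 0 s := by
  refine starConvex_zero_iff.2 fun x hx t ht₀ ht₁ ↦ ?_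
  rcases ht₁.lt_or_eq with ht₁ | rfl
  · exact interior_subset (hs x hx t ⟨ht₀, ht₁⟩)
  · rwa [one_smul]

theorem mem_nhds_zero (hs : IsStrictlyStarShaped s) (hne : s.Nonempty) : s ∈ 𝓝 0 := by
  obtain ⟨x, hx⟩ := hne
  simpa using mem_interior_iff_mem_nhds.1 (hs x hx 0 ⟨le_rfl, one_pos⟩)

theorem smul_subset_smul_interior (hs : IsStrictlyStarShaped s) {r r' : ℝ} (hr : 0 ≤ r)
    (hrr' : r < r') : r • s ⊆ r' • interior s := by
  rintro _ ⟨x, hx, rfl⟩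
  have hr' : 0 < r' := hr.trans_lt hrr'
  refine ⟨(r / r') • x, hs x hx _ ⟨by positivity, (div_lt_one hr').2 hrr'⟩, ?_⟩
  simp only [smul_smul, mul_div_cancel₀ _ hr'.ne']

end IsStrictlyStarShaped

variable [ContinuousSMul ℝ E]

theorem StarConvex.gauge_le_one_iff_mem {s : Set E} (hs : StarConvex ℝ 0 s)
    (ha : Absorbent ℝ s) (hsc : IsClosed s) {x : E} : gauge s x ≤ 1 ↔ x ∈ s := by
  refine ⟨fun h ↦ hsc.closure_subset ?_, gauge_le_one_of_mem⟩
  have hrx : ∀ᶠ r : ℝ in 𝓝[<] 1, r • x ∈ s := by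
    filter_upwards [Ico_mem_nhdsLT one_pos] with r ⟨hr₀, hr₁⟩
    apply hs.setOfPred_gauge_lt_one_subset ha
    rw [mem_ofPred_eq, gauge_smul_of_nonneg hr₀]
    exact mul_lt_one_of_nonneg_of_lt_one_left hr₀ hr₁ h
  refine mem_closure_of_tendsto ?_ hrx
  exact ((continuous_id.smul continuous_const).tendsto' 1 x (one_smul ℝ x)).mono_left
    inf_le_left

theorem StarConvex.gauge_le_iff_mem_smul {s : Set E} (hs : StarConvex ℝ 0 s)
    (ha : Absorbent ℝ s) (hsc : IsClosed s) {x : E} {c : ℝ} (hc : 0 < c) :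
    gauge s x ≤ c ↔ x ∈ c • s := by
  rw [mem_smul_set_iff_inv_smul_mem₀ hc.ne', ← hs.gauge_le_one_iff_mem ha hsc,
    gauge_smul_of_nonneg (inv_nonneg.2 hc.le), smul_eq_mul, inv_mul_le_one₀ hc]

theorem StarConvex.lowerSemicontinuous_gauge {s : Set E} (hs : StarConvex ℝ 0 s)
    (ha : Absorbent ℝ s) (hsc : IsClosed s) : LowerSemicontinuous (gauge s) := by
  intro x c hc
  rcases lt_or_ge c 0 with hc₀ | hc₀
  · exact .of_forall fun y ↦ hc₀.trans_le (gauge_nonneg y)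
  obtain ⟨r, hcr, hrx⟩ := exists_between hc
  have hr : 0 < r := hc₀.trans_lt hcr
  have hx : x ∉ r • s := by rwa [← hs.gauge_le_iff_mem_smul ha hsc hr, not_le]
  filter_upwards [(hsc.smul_of_ne_zero hr.ne').isOpen_compl.mem_nhds hx] with y hy
  rw [mem_compl_iff, ← hs.gauge_le_iff_mem_smul ha hsc hr, not_le] at hy
  exact hcr.trans hy

namespace IsStrictlyStarShaped

variable {s : Set E}

theorem upperSemicontinuous_gauge (hs : IsStrictlyStarShaped s) (ha : Absorbent ℝ s) :
    UpperSemicontinuous (gauge s) := by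
  intro x c hc
  obtain ⟨r, hr₀, hrc, hx⟩ := exists_lt_of_gauge_lt ha hc
  obtain ⟨r', hrr', hr'c⟩ := exists_between hrc
  have hr' : 0 < r' := hr₀.trans hrr'
  filter_upwards [(isOpen_interior.smul₀ hr'.ne').mem_nhds
    (hs.smul_subset_smul_interior hr₀.le hrr' hx)] with y hy
  exact (gauge_le_of_mem hr'.le (smul_set_mono interior_subset hy)).trans_lt hr'c

theorem continuous_gauge (hs : IsStrictlyStarShaped s) (hsc : IsClosed s) (h₀ : s ∈ 𝓝 0) :
    Continuous (gauge s) :=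
  have ha : Absorbent ℝ s := absorbent_nhds_zero h₀
  continuous_iff_lower_upperSemicontinuous.2
    ⟨hs.starConvex.lowerSemicontinuous_gauge ha hsc, hs.upperSemicontinuous_gauge ha⟩

end IsStrictlyStarShaped

variable [T1Space E]

theorem continuous_gaugeRescale_of_continuous_gauge {s t : Set E}
    (hs : Continuous (gauge s)) (ht : Continuous (gauge t)) (ht₀ : t ∈ 𝓝 0)
    (htb : IsVonNBounded ℝ t) : Continuous (gaugeRescale s t) := by
  have hta : Absorbent ℝ t := absorbent_nhds_zero ht₀
  refine continuous_iff_continuousAt.2 fun x ↦ ?_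
  rcases eq_or_ne x 0 with rfl | hx
  · rw [ContinuousAt, gaugeRescale_zero]
    nth_rewrite 2 [← comap_gauge_nhds_zero htb ht₀]
    simp only [tendsto_comap_iff, Function.comp_def, gauge_gaugeRescale _ hta htb]
    simpa only [gauge_zero] using hs.tendsto 0
  · exact (hs.continuousAt.div ht.continuousAt ((gauge_pos hta htb).2 hx).ne').smul
      continuousAt_id

theorem IsStrictlyStarShaped.nonempty_homeomorph {s t : Set E} (hs : IsStrictlyStarShaped s)
    (hsc : IsClosed s) (hsb : IsVonNBounded ℝ s) (hsne : s.Nonempty)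
    (ht : IsStrictlyStarShaped t) (htc : IsClosed t) (htb : IsVonNBounded ℝ t)
    (htne : t.Nonempty) : Nonempty (s ≃ₜ t) := by
  have hs₀ := hs.mem_nhds_zero hsne
  have ht₀ := ht.mem_nhds_zero htne
  have hsa : Absorbent ℝ s := absorbent_nhds_zero hs₀
  have hta : Absorbent ℝ t := absorbent_nhds_zero ht₀
  let e : E ≃ₜ E :=
    { toEquiv := gaugeRescaleEquiv s t hsa hsb hta htb
      continuous_toFun := continuous_gaugeRescale_of_continuous_gauge
        (hs.continuous_gauge hsc hs₀) (ht.continuous_gauge htc ht₀) ht₀ htb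
      continuous_invFun := continuous_gaugeRescale_of_continuous_gauge
        (ht.continuous_gauge htc ht₀) (hs.continuous_gauge hsc hs₀) hs₀ hsb }
  refine ⟨e.sets (Set.ext fun x ↦ ?_)⟩
  change x ∈ s ↔ gaugeRescale s t x ∈ t
  rw [← hs.starConvex.gauge_le_one_iff_mem hsa hsc,
    ← ht.starConvex.gauge_le_one_iff_mem hta htc, gauge_gaugeRescale s hta htb]

end StrictlyStarShaped

section NormedSpace

variable {E : Type*} [NormedAddCommGroup E] [NormedSpace ℝ E]

theorem isStrictlyStarShaped_closedBall_zero {r : ℝ} (hr : 0 < r) :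
    IsStrictlyStarShaped (closedBall (0 : E) r) := by
  intro x hx t ⟨ht₀, ht₁⟩
  apply ball_subset_interior_closedBall
  rw [mem_ball_zero_iff, norm_smul, Real.norm_of_nonneg ht₀]
  exact (mul_le_mul_of_nonneg_left (mem_closedBall_zero_iff.1 hx) ht₀).trans_lt
    (mul_lt_of_lt_one_left hr ht₁)

theorem IsStrictlyStarShaped.nonempty_homeomorph_closedBall {s : Set E}
    (hs : IsStrictlyStarShaped s) (hsc : IsClosed s) (hsb : IsBounded s) (hsne : s.Nonempty) :
    Nonempty (s ≃ₜ closedBall (0 : E) 1) :=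
  hs.nonempty_homeomorph hsc (NormedSpace.isVonNBounded_of_isBounded ℝ hsb) hsne
    (isStrictlyStarShaped_closedBall_zero one_pos) isClosed_closedBall
    (NormedSpace.isVonNBounded_closedBall ℝ E 1) (nonempty_closedBall.2 zero_le_one)

end NormedSpace

namespace B2

def superunitaryRegion : Set (ℝ × ℝ) :=
  {p | 1 ≤ p.1 ∧ 1 ≤ p.2 ∧ p.1 ≤ p.2 ^ 2 + 1 ∧ p.1 * p.2 ≤ p.1 + p.2 ^ 2 + 1 ∧
    p.1 * p.2 ^ 2 ≤ p.1 ^ 2 + p.2 ^ 2 + 2 * p.1 + 1 ∧ p.2 ≤ p.1 + 1}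

def strictSuperunitaryRegion : Set (ℝ × ℝ) :=
  {p | 1 < p.1 ∧ 1 < p.2 ∧ p.1 < p.2 ^ 2 + 1 ∧ p.1 * p.2 < p.1 + p.2 ^ 2 + 1 ∧
    p.1 * p.2 ^ 2 < p.1 ^ 2 + p.2 ^ 2 + 2 * p.1 + 1 ∧ p.2 < p.1 + 1}

theorem superunitaryRegion_subset_Icc : superunitaryRegion ⊆ Icc (1, 1) (5, 3) := by
  rintro ⟨a, b⟩ ⟨h₁, h₂, h₃, h₄, h₅, h₆⟩
  have hb : b ≤ 3 := by
    nlinarith [sq_nonneg (a - 2), sq_nonneg (b - 1), sq_nonneg (a - b),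
      mul_nonneg (sub_nonneg.2 h₁) (sub_nonneg.2 h₂)]
  have ha : a ≤ 5 := by nlinarith [mul_nonneg (sub_nonneg.2 h₂) (sub_nonneg.2 hb)]
  exact ⟨⟨h₁, h₂⟩, ha, hb⟩

theorem isCompact_superunitaryRegion : IsCompact superunitaryRegion := by
  refine isCompact_Icc.of_isClosed_subset ?_ superunitaryRegion_subset_Icc
  simp only [superunitaryRegion, ofPred_and]
  repeat' apply IsClosed.inter
  all_goals exact isClosed_le (by fun_prop) (by fun_prop)

theorem strictSuperunitaryRegion_subset_interior :
    strictSuperunitaryRegion ⊆ interior superunitaryRegion := by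
  refine interior_maximal (fun p hp ↦ ?_) ?_
  · obtain ⟨h₁, h₂, h₃, h₄, h₅, h₆⟩ := hp
    exact ⟨h₁.le, h₂.le, h₃.le, h₄.le, h₅.le, h₆.le⟩
  · simp only [strictSuperunitaryRegion, ofPred_and]
    repeat' apply IsOpen.inter
    all_goals exact isOpen_lt (by fun_prop) (by fun_prop)

/- Along the segment from `(2, 2)` to `(a, b)`, each defining polynomial, as a polynomial in `t`,
is `t ^ k` times its value at `(a, b)` plus `1 - t` times a polynomial positive on `[0, 1]`. -/
theorem homothety_mem_strictSuperunitaryRegion {a b t : ℝ} (h : (a, b) ∈ superunitaryRegion)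
    (ht₀ : 0 ≤ t) (ht₁ : t < 1) :
    (t * (a - 2) + 2, t * (b - 2) + 2) ∈ strictSuperunitaryRegion := by
  obtain ⟨⟨-, -⟩, ha₅, hb₃⟩ := superunitaryRegion_subset_Icc h
  obtain ⟨h₁, h₂, h₃, h₄, h₅, h₆⟩ := h
  dsimp only at *
  refine ⟨by nlinarith, by nlinarith, ?_, ?_, ?_, by nlinarith⟩
  · nlinarith [mul_nonneg (mul_nonneg ht₀ ht₀) (sub_nonneg.2 h₃),
      mul_nonneg (mul_nonneg (sub_nonneg.2 ht₁.le) ht₀) (by nlinarith : (0 : ℝ) ≤ 4 * b - a)]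
  · nlinarith [mul_nonneg (mul_nonneg ht₀ ht₀) (sub_nonneg.2 h₄),
      mul_nonneg (mul_nonneg (sub_nonneg.2 ht₁.le) ht₀) (by nlinarith : (0 : ℝ) ≤ 2 * b - a + 4)]
  · have hlin : (0 : ℝ) ≤ 2 * a - 4 * b + 11 := by
      nlinarith [sq_nonneg (b - 1), sq_nonneg (b - 3)]
    have hquad : (0 : ℝ) ≤ 10 + 4 * (a - 2) - 8 * (b - 2) + (a - 2) ^ 2 - (b - 2) ^ 2
        - 4 * (a - 2) * (b - 2) := by
      nlinarith [sq_nonneg (a - 2), sq_nonneg (b - 3),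
        mul_nonneg (sub_nonneg.2 h₂) (sub_nonneg.2 hb₃),
        mul_nonneg (sub_nonneg.2 h₁) (sub_nonneg.2 hb₃),
        mul_nonneg (sub_nonneg.2 h₁) (sub_nonneg.2 ha₅)]
    have hquot : (0 : ℝ) < 5 * (1 + t + t ^ 2) + t * (1 + t) * (2 * (a - 2) - 4 * (b - 2))
        + t ^ 2 * ((a - 2) ^ 2 - (b - 2) ^ 2 - 4 * (a - 2) * (b - 2)) := by
      nlinarith [mul_nonneg (mul_nonneg ht₀ (sub_nonneg.2 ht₁.le)) hlin,
        mul_nonneg (mul_nonneg ht₀ ht₀) hquad]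
    nlinarith [mul_pos (sub_pos.2 ht₁) hquot,
      mul_nonneg (mul_nonneg (mul_nonneg ht₀ ht₀) ht₀) (sub_nonneg.2 h₅)]

theorem lineMap_mem_interior_superunitaryRegion {p : ℝ × ℝ} (hp : p ∈ superunitaryRegion)
    {t : ℝ} (ht : t ∈ Ico (0 : ℝ) 1) :
    AffineMap.lineMap (2, 2) p t ∈ interior superunitaryRegion := by
  apply strictSuperunitaryRegion_subset_interior
  convert homothety_mem_strictSuperunitaryRegion hp ht.1 ht.2 using 1
  ext <;> simp [AffineMap.lineMap_apply]

/-- The chart `x ↦ (x 0 + 2, x 1 + 2)`, which puts the centre `(2, 2)` of the region at the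
origin. -/
noncomputable def centredChart : EuclideanSpace ℝ (Fin 2) ≃ₜ ℝ × ℝ :=
  ((EuclideanSpace.equiv (Fin 2) ℝ).trans
    (ContinuousLinearEquiv.finTwoArrow ℝ ℝ)).toHomeomorph.trans (Homeomorph.addRight (2, 2))

theorem centredChart_smul (t : ℝ) (x : EuclideanSpace ℝ (Fin 2)) :
    centredChart (t • x) = AffineMap.lineMap (2, 2) (centredChart x) t := by
  simp [centredChart, AffineMap.lineMap_apply]

theorem isStrictlyStarShaped_centredChart_preimage :
    IsStrictlyStarShaped (centredChart ⁻¹' superunitaryRegion) := by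
  intro x hx t ht
  rw [← Homeomorph.preimage_interior, mem_preimage, centredChart_smul]
  exact lineMap_mem_interior_superunitaryRegion hx ht

end B2

open B2

/-- The superunitary region of the `B₂/C₂` cluster algebra, embedded in the
plane via the initial cluster, is homeomorphic to the closed unit disc. -/
theorem B2_superunitary_region_homeomorph_closed_disc :
    Nonempty (
      ({p : ℝ × ℝ | 1 ≤ p.1 ∧ 1 ≤ p.2 ∧
          p.1 ≤ p.2 ^ 2 + 1 ∧
          p.1 * p.2 ≤ p.1 + p.2 ^ 2 + 1 ∧
          p.1 * p.2 ^ 2 ≤ p.1 ^ 2 + p.2 ^ 2 + 2 * p.1 + 1 ∧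
          p.2 ≤ p.1 + 1} : Set (ℝ × ℝ)) ≃ₜ
        (Metric.closedBall (0 : EuclideanSpace ℝ (Fin 2)) 1)) := by
  have hcompact : IsCompact (centredChart ⁻¹' superunitaryRegion) :=
    centredChart.isCompact_preimage.2 isCompact_superunitaryRegion
  have hne : (centredChart ⁻¹' superunitaryRegion).Nonempty :=
    ⟨centredChart.symm (2, 2), by norm_num [superunitaryRegion]⟩
  obtain ⟨e⟩ := isStrictlyStarShaped_centredChart_preimage.nonempty_homeomorph_closedBall
    hcompact.isClosed hcompact.isBounded hne
  exact ⟨(centredChart.sets rfl).symm.trans e⟩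
end

section
/- The subset S = {(a, b, c) ∈ ℝ³ : 1 ≤ a, 1 ≤ b, 1 ≤ c, a ≤ b + c, b ≤ a + c, c ≤ a + b, a·b ≤ a + b + c, b·c ≤ a + b + c, a·c ≤ a + b + c} of three-dimensional space (with its subspace topology) is homeomorphic to the closed unit ball of radius 1 centered at the origin in three-dimensional Euclidean space. (The superunitary region of the A₃ cluster algebra is homeomorphic to the three-dimensional associahedron.) -/
open Metric Set Filter Topology Pointwise

variable {F : Type*} [NormedAddCommGroup F] [NormedSpace ℝ F]

/-- upward closedness of dilates for star-shaped sets -/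
lemma mem_smul_of_starAux {K : Set F} (h0 : StarConvex ℝ 0 K) {x : F} {r r' : ℝ}
    (hr : 0 < r) (hrr' : r ≤ r') (hx : x ∈ r • K) : x ∈ r' • K := by
  obtain ⟨z, hz, rfl⟩ := hx
  have hr' : 0 < r' := hr.trans_le hrr'
  have hmem : (1 - r / r') • (0:F) + (r / r') • z ∈ K :=
    h0 hz (by rw [sub_nonneg]; exact div_le_one_of_le₀ hrr' hr'.le)
      (by positivity) (by ring)
  refine ⟨(r / r') • z, by simpa using hmem, ?_⟩
  show r' • (r / r') • z = r • z
  rw [smul_smul]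
  congr 1
  field_simp

lemma mem_of_gauge_le_oneAux {K : Set F} (hcl : IsClosed K) (h0 : StarConvex ℝ 0 K)
    (habs : Absorbent ℝ K) {x : F} (hx : gauge K x ≤ 1) : x ∈ K := by
  have key : ∀ n : ℕ, (1 + ((n:ℝ)+1)⁻¹)⁻¹ • x ∈ K := by
    intro n
    have hpos : (0:ℝ) < ((n:ℝ)+1)⁻¹ := by positivity
    obtain ⟨b, hb0, hblt, hbx⟩ := exists_lt_of_gauge_lt habs
      (show gauge K x < 1 + ((n:ℝ)+1)⁻¹ by linarith)
    have hx' : x ∈ (1 + ((n:ℝ)+1)⁻¹) • K :=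
      mem_smul_of_starAux h0 hb0 hblt.le hbx
    obtain ⟨z, hz, rfl⟩ := hx'
    rw [smul_smul, inv_mul_cancel₀ (by positivity), one_smul]
    exact hz
  have hlim : Tendsto (fun n : ℕ => (1 + ((n:ℝ)+1)⁻¹)⁻¹ • x) atTop (𝓝 x) := by
    have h1 : Tendsto (fun n : ℕ => ((n:ℝ)+1)⁻¹) atTop (𝓝 0) :=
      tendsto_one_div_add_atTop_nhds_zero_nat.congr (by intro n; rw [one_div])
    have h2 : Tendsto (fun n : ℕ => (1 + ((n:ℝ)+1)⁻¹)⁻¹) atTop (𝓝 1) := by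
      have := ((h1.const_add 1).inv₀ (by norm_num)).comp tendsto_id
      simpa using this
    simpa using h2.smul_const x
  exact hcl.mem_of_tendsto hlim (Eventually.of_forall key)

lemma gauge_add_le_of_ball {K : Set F} {ε : ℝ} (hε : 0 < ε)
    (hstar : ∀ y ∈ ball (0:F) ε, StarConvex ℝ y K) (habs : Absorbent ℝ K)
    (x h : F) : gauge K (x + h) ≤ gauge K x + ‖h‖ / ε := by
  rcases eq_or_ne h 0 with rfl | hh
  · simp
  have hhn : 0 < ‖h‖ := norm_pos_iff.2 hh
  refine le_of_forall_pos_le_add fun δ hδ => ?_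
  obtain ⟨b, hb0, hblt, hbx⟩ := exists_lt_of_gauge_lt habs
    (show gauge K x < gauge K x + δ by linarith)
  obtain ⟨z, hz, hzx⟩ := hbx
  set τ : ℝ := gauge K x + δ + ‖h‖ / ε with hτ
  clear_value τ
  have hepos : (0:ℝ) < ‖h‖ / ε := by positivity
  have hτb : b + ‖h‖ / ε < τ := by rw [hτ]; linarith
  have hτ0 : 0 < τ := by
    have := gauge_nonneg (s := K) x
    rw [hτ]; linarith
  have hτbpos : 0 < τ - b := by linarith
  set y : F := (τ - b)⁻¹ • h with hy
  clear_value y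
  have hymem : y ∈ ball (0:F) ε := by
    rw [mem_ball_zero_iff, hy, norm_smul, norm_inv, Real.norm_eq_abs,
      abs_of_pos hτbpos]
    rw [inv_mul_lt_iff₀ hτbpos]
    calc ‖h‖ = (‖h‖ / ε) * ε := by field_simp
    _ < (τ - b) * ε := by
        apply mul_lt_mul_of_pos_right _ hε
        linarith
  have hmem : (1 - b/τ) • y + (b/τ) • z ∈ K := by
    refine hstar y hymem hz ?_ ?_ ?_
    · rw [sub_nonneg]; exact div_le_one_of_le₀ (by linarith [hτb, div_nonneg hhn.le hε.le]) hτ0.le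
    · positivity
    · ring
  have hxh : x + h ∈ τ • K := by
    refine ⟨(1 - b/τ) • y + (b/τ) • z, hmem, ?_⟩
    show τ • ((1 - b/τ) • y + (b/τ) • z) = x + h
    have hbz : b • z = x := hzx
    rw [hy, smul_add, smul_smul, smul_smul, smul_smul]
    have e1 : τ * (1 - b / τ) = τ - b := by field_simp
    have e2 : τ * (b / τ) = b := by field_simp
    rw [e1, mul_inv_cancel₀ hτbpos.ne', e2, one_smul, hbz]
    abel
  have := gauge_le_of_mem hτ0.le hxh
  linarith [this]

lemma continuous_gauge_of_ball {K : Set F} {ε : ℝ} (hε : 0 < ε)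
    (hstar : ∀ y ∈ ball (0:F) ε, StarConvex ℝ y K) (habs : Absorbent ℝ K) :
    Continuous (gauge K) := by
  have key : ∀ x y : F, gauge K x ≤ gauge K y + ‖x - y‖ / ε := by
    intro x y
    have := gauge_add_le_of_ball hε hstar habs y (x - y)
    simpa using this
  rw [Metric.continuous_iff]
  intro x δ hδ
  refine ⟨ε * δ, by positivity, fun y hy => ?_⟩
  rw [Real.dist_eq]
  have h1 := key y x
  have h2 := key x y
  have hxy : ‖y - x‖ < ε * δ := by rwa [dist_eq_norm] at hy
  have hyx : ‖x - y‖ < ε * δ := by rwa [norm_sub_rev]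
  have : ‖y - x‖ / ε < δ := by rw [div_lt_iff₀ hε]; linarith
  have : ‖x - y‖ / ε < δ := by rw [div_lt_iff₀ hε]; linarith
  rw [abs_lt]
  constructor <;> nlinarith [div_nonneg (norm_nonneg (y-x)) hε.le,
    div_nonneg (norm_nonneg (x-y)) hε.le]

theorem star_homeo_ball {K : Set F} {ε : ℝ} (hε : 0 < ε) (hK : IsCompact K)
    (hb : ball (0:F) ε ⊆ K) (hstar : ∀ y ∈ ball (0:F) ε, StarConvex ℝ y K) :
    Nonempty (K ≃ₜ (closedBall (0:F) 1)) := by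
  have habs : Absorbent ℝ K := (absorbent_ball_zero hε).mono hb
  have hbnd : Bornology.IsVonNBounded ℝ K :=
    NormedSpace.isVonNBounded_of_isBounded _ hK.isBounded
  have hcl : IsClosed K := hK.isClosed
  have h0 : StarConvex ℝ 0 K := hstar 0 (mem_ball_self hε)
  have hgc : Continuous (gauge K) := continuous_gauge_of_ball hε hstar habs
  have hgb : ∀ x : F, gauge K x ≤ ‖x‖ / ε := by
    intro x
    have := gauge_mono (absorbent_ball_zero (𝕜 := ℝ) hε) hb x
    rwa [gauge_ball hε.le] at this
  set Ψ : F → F := fun x => (gauge K x / ‖x‖) • x with hΨ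
  have hnorm : ∀ x : F, ‖Ψ x‖ = gauge K x := by
    intro x
    rcases eq_or_ne x 0 with rfl | hx
    · simp [hΨ, gauge_zero]
    · rw [hΨ]
      simp only
      rw [norm_smul, Real.norm_eq_abs,
        abs_of_nonneg (div_nonneg (gauge_nonneg _) (norm_nonneg _)),
        div_mul_cancel₀ _ (norm_ne_zero_iff.2 hx)]
  have hgauge_smul : ∀ (c : ℝ) (x : F), 0 ≤ c → gauge K (c • x) = c * gauge K x := by
    intro c x hc
    rw [gauge_smul_of_nonneg hc, smul_eq_mul]
  have hΨcont : Continuous Ψ := by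
    rw [continuous_iff_continuousAt]
    intro x
    rcases eq_or_ne x 0 with rfl | hx
    · have hΨ0 : Ψ 0 = 0 := by simp [hΨ]
      rw [ContinuousAt, hΨ0]
      apply squeeze_zero_norm (a := fun y : F => ε⁻¹ * ‖y‖)
      · intro y
        rw [hnorm y]
        calc gauge K y ≤ ‖y‖/ε := hgb y
        _ = ε⁻¹ * ‖y‖ := by ring
      · have : Tendsto (fun y : F => ε⁻¹ * ‖y‖) (𝓝 0) (𝓝 (ε⁻¹ * ‖(0:F)‖)) :=
          (continuous_const.mul continuous_norm).tendsto 0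
        simpa using this
    · exact ((hgc.continuousAt.div (continuous_norm.continuousAt)
        (norm_ne_zero_iff.2 hx)).smul continuousAt_id)
  -- forward map into the ball
  have hΨmem : ∀ x ∈ K, Ψ x ∈ closedBall (0:F) 1 := by
    intro x hx
    rw [mem_closedBall_zero_iff, hnorm]
    exact gauge_le_one_of_mem hx
  -- inverse map
  set Φ : F → F := fun y => (‖y‖ / gauge K y) • y with hΦ
  have hΦmem : ∀ y ∈ closedBall (0:F) 1, Φ y ∈ K := by
    intro y hy
    rcases eq_or_ne y 0 with rfl | hy0
    · have : Φ 0 = 0 := by simp [hΦ]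
      rw [this]
      exact hb (mem_ball_self hε)
    · have hg0 : 0 < gauge K y := (gauge_pos habs hbnd).2 hy0
      have : gauge K (Φ y) = ‖y‖ := by
        rw [hΦ]
        simp only
        rw [hgauge_smul _ _ (div_nonneg (norm_nonneg _) hg0.le)]
        field_simp
      apply mem_of_gauge_le_oneAux hcl h0 habs
      rw [this]
      rwa [mem_closedBall_zero_iff] at hy
  have hleft : ∀ x ∈ K, Φ (Ψ x) = x := by
    intro x hx
    rcases eq_or_ne x 0 with rfl | hx0
    · simp [hΦ, hΨ]
    · have hg0 : 0 < gauge K x := (gauge_pos habs hbnd).2 hx0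
      have hn0 : (0:ℝ) < ‖x‖ := norm_pos_iff.2 hx0
      rw [hΦ]
      simp only
      rw [hnorm x, hΨ]
      simp only
      rw [hgauge_smul _ _ (div_nonneg hg0.le hn0.le), smul_smul]
      have : gauge K x / (gauge K x / ‖x‖ * gauge K x) * (gauge K x / ‖x‖) = 1 := by
        field_simp
      rw [this, one_smul]
  have hright : ∀ y ∈ closedBall (0:F) 1, Ψ (Φ y) = y := by
    intro y hy
    rcases eq_or_ne y 0 with rfl | hy0
    · simp [hΦ, hΨ]
    · have hg0 : 0 < gauge K y := (gauge_pos habs hbnd).2 hy0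
      have hn0 : (0:ℝ) < ‖y‖ := norm_pos_iff.2 hy0
      rw [hΨ]
      simp only
      rw [hΦ]
      simp only
      rw [hgauge_smul _ _ (div_nonneg hn0.le hg0.le), smul_smul,
        norm_smul, Real.norm_eq_abs, abs_of_nonneg (div_nonneg hn0.le hg0.le)]
      have : ‖y‖ / gauge K y * gauge K y / (‖y‖ / gauge K y * ‖y‖) * (‖y‖ / gauge K y) = 1 := by
        field_simp
      rw [this, one_smul]
  haveI : CompactSpace K := isCompact_iff_compactSpace.1 hK
  set e : K ≃ (closedBall (0:F) 1) :=
    { toFun := fun x => ⟨Ψ x, hΨmem x x.2⟩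
      invFun := fun y => ⟨Φ y, hΦmem y y.2⟩
      left_inv := fun x => Subtype.ext (hleft x x.2)
      right_inv := fun y => Subtype.ext (hright y y.2) } with he
  have hecont : Continuous e := by
    rw [he]
    exact Continuous.subtype_mk (hΨcont.comp continuous_subtype_val) _
  exact ⟨hecont.homeoOfEquivCompactToT2⟩

section A3aux

/-- product lower bound from absolute-value bounds -/
lemma A3_prod_lb {u v α β : ℝ} (hu : |u| ≤ α) (hv : |v| ≤ β) : -(α*β) ≤ u*v := by
  have h0α : 0 ≤ α := (abs_nonneg u).trans hu
  have h1 : |u*v| ≤ α*β := by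
    rw [abs_mul]
    exact mul_le_mul hu hv (abs_nonneg v) h0α
  have h2 := neg_abs_le (u*v)
  linarith

/-- coordinates of points in the superunitary region are at most 4 -/
lemma A3_ub4 {a b c : ℝ} (h1 : 1 ≤ a) (h2 : 1 ≤ b) (h3 : 1 ≤ c)
    (h4 : a ≤ b + c) (h5 : b ≤ a + c) (h6 : c ≤ a + b)
    (h7 : a*b ≤ a+b+c) (h8 : b*c ≤ a+b+c) (h9 : a*c ≤ a+b+c) :
    a ≤ 4 ∧ b ≤ 4 ∧ c ≤ 4 :=
  ⟨by nlinarith, by nlinarith, by nlinarith⟩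

/-- the key quadratic lower bounds on the superunitary region -/
lemma A3_pairs {a b c : ℝ} (h1 : 1 ≤ a) (h2 : 1 ≤ b) (h3 : 1 ≤ c)
    (h4 : a ≤ b + c) (h5 : b ≤ a + c) (h6 : c ≤ a + b)
    (h7 : a*b ≤ a+b+c) (h8 : b*c ≤ a+b+c) (h9 : a*c ≤ a+b+c) :
    -1 ≤ (2-a)*(2-b) ∧ -1 ≤ (2-b)*(2-c) ∧ -1 ≤ (2-a)*(2-c) := by
  have hba : b - 2 ≤ a := by
    nlinarith [mul_nonneg (by linarith : (0:ℝ) ≤ a + c - b) (by linarith : (0:ℝ) ≤ b - 1)]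
  have hab : a - 2 ≤ b := by
    nlinarith [mul_nonneg (by linarith : (0:ℝ) ≤ b + c - a) (by linarith : (0:ℝ) ≤ a - 1)]
  have hcb : c - 2 ≤ b := by
    nlinarith [mul_nonneg (by linarith : (0:ℝ) ≤ a + b - c) (by linarith : (0:ℝ) ≤ c - 1)]
  have hbc : b - 2 ≤ c := by
    nlinarith [mul_nonneg (by linarith : (0:ℝ) ≤ a + c - b) (by linarith : (0:ℝ) ≤ b - 1)]
  have hca : c - 2 ≤ a := by
    nlinarith [mul_nonneg (by linarith : (0:ℝ) ≤ a + b - c) (by linarith : (0:ℝ) ≤ c - 1)]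
  have hac : a - 2 ≤ c := by
    nlinarith [mul_nonneg (by linarith : (0:ℝ) ≤ b + c - a) (by linarith : (0:ℝ) ≤ a - 1)]
  refine ⟨?_, ?_, ?_⟩
  · nlinarith [mul_nonneg (by linarith : (0:ℝ) ≤ a-b+2) (by linarith : (0:ℝ) ≤ b-a+2),
      sq_nonneg (a+b-4)]
  · nlinarith [mul_nonneg (by linarith : (0:ℝ) ≤ b-c+2) (by linarith : (0:ℝ) ≤ c-b+2),
      sq_nonneg (b+c-4)]
  · nlinarith [mul_nonneg (by linarith : (0:ℝ) ≤ a-c+2) (by linarith : (0:ℝ) ≤ c-a+2),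
      sq_nonneg (a+c-4)]

/-- interpolation for the quadratic constraints -/
lemma A3_quad_interp {p1 p2 p3 x1 x2 x3 t s : ℝ}
    (hp1 : |p1 - 2| ≤ 1/12) (hp2 : |p2 - 2| ≤ 1/12) (hp3 : |p3 - 2| ≤ 1/12)
    (hx1l : 1 ≤ x1) (hx1u : x1 ≤ 4) (hx2l : 1 ≤ x2) (hx2u : x2 ≤ 4)
    (hpair : -1 ≤ (2-x1)*(2-x2))
    (hgx : x1*x2 - x1 - x2 - x3 ≤ 0)
    (ht : 0 ≤ t) (hs : 0 ≤ s) (hts : t + s = 1) :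
    (t*p1+s*x1)*(t*p2+s*x2) ≤ (t*p1+s*x1)+(t*p2+s*x2)+(t*p3+s*x3) := by
  obtain ⟨hp1l, hp1u⟩ := abs_le.1 hp1
  obtain ⟨hp2l, hp2u⟩ := abs_le.1 hp2
  obtain ⟨hp3l, hp3u⟩ := abs_le.1 hp3
  have hx1abs : |2 - x1| ≤ 2 := abs_le.2 ⟨by linarith, by linarith⟩
  have hx2abs : |2 - x2| ≤ 2 := abs_le.2 ⟨by linarith, by linarith⟩
  have e : (p1-x1)*(p2-x2)
      = (p1-2)*(p2-2) + (p1-2)*(2-x2) + (2-x1)*(p2-2) + (2-x1)*(2-x2) := by ring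
  have l1 := A3_prod_lb hp1 hp2
  have l2 := A3_prod_lb hp1 hx2abs
  have l3 := A3_prod_lb hx1abs hp2
  have hD : -(193/144 : ℝ) ≤ (p1-x1)*(p2-x2) := by
    rw [e]; norm_num at l1 l2 l3 ⊢; linarith
  have hgp : p1*p2 - p1 - p2 - p3 ≤ -(203/144 : ℝ) := by
    have hm : p1*p2 ≤ (25/12)*(25/12) :=
      mul_le_mul (by linarith) (by linarith) (by linarith) (by norm_num)
    norm_num at hm ⊢; linarith
  have hsD : -(203/144 : ℝ) ≤ s * ((p1-x1)*(p2-x2)) := by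
    rcases le_or_gt 0 ((p1-x1)*(p2-x2)) with h | h
    · have := mul_nonneg hs h
      linarith
    · have hs1 : s ≤ 1 := by linarith
      have h0 : (1 - s) * ((p1-x1)*(p2-x2)) ≤ 0 :=
        mul_nonpos_of_nonneg_of_nonpos (by linarith) h.le
      have hexp : (1-s)*((p1-x1)*(p2-x2))
          = (p1-x1)*(p2-x2) - s*((p1-x1)*(p2-x2)) := by ring
      linarith
  have hid : (t*p1+s*x1)*(t*p2+s*x2) - ((t*p1+s*x1)+(t*p2+s*x2)+(t*p3+s*x3))
      = t*(p1*p2-p1-p2-p3) + s*(x1*x2-x1-x2-x3) - t*(s*((p1-x1)*(p2-x2))) := by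
    have hs' : s = 1 - t := by linarith
    subst hs'
    ring
  have f1 : t*(p1*p2-p1-p2-p3) ≤ t*(-(203/144 : ℝ)) := mul_le_mul_of_nonneg_left hgp ht
  have f2 : s*(x1*x2-x1-x2-x3) ≤ 0 := mul_nonpos_of_nonneg_of_nonpos hs hgx
  have f3 : t*(-(203/144 : ℝ)) ≤ t*(s*((p1-x1)*(p2-x2))) := mul_le_mul_of_nonneg_left hsD ht
  linarith

/-- the core star-convexity computation -/
lemma A3_star_core {p1 p2 p3 x1 x2 x3 t s : ℝ}
    (hp1 : |p1 - 2| ≤ 1/12) (hp2 : |p2 - 2| ≤ 1/12) (hp3 : |p3 - 2| ≤ 1/12)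
    (h1 : 1 ≤ x1) (h2 : 1 ≤ x2) (h3 : 1 ≤ x3)
    (h4 : x1 ≤ x2 + x3) (h5 : x2 ≤ x1 + x3) (h6 : x3 ≤ x1 + x2)
    (h7 : x1*x2 ≤ x1+x2+x3) (h8 : x2*x3 ≤ x1+x2+x3) (h9 : x1*x3 ≤ x1+x2+x3)
    (ht : 0 ≤ t) (hs : 0 ≤ s) (hts : t + s = 1) :
    1 ≤ t*p1+s*x1 ∧ 1 ≤ t*p2+s*x2 ∧ 1 ≤ t*p3+s*x3 ∧
    t*p1+s*x1 ≤ (t*p2+s*x2) + (t*p3+s*x3) ∧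
    t*p2+s*x2 ≤ (t*p1+s*x1) + (t*p3+s*x3) ∧
    t*p3+s*x3 ≤ (t*p1+s*x1) + (t*p2+s*x2) ∧
    (t*p1+s*x1)*(t*p2+s*x2) ≤ (t*p1+s*x1)+(t*p2+s*x2)+(t*p3+s*x3) ∧
    (t*p2+s*x2)*(t*p3+s*x3) ≤ (t*p1+s*x1)+(t*p2+s*x2)+(t*p3+s*x3) ∧
    (t*p1+s*x1)*(t*p3+s*x3) ≤ (t*p1+s*x1)+(t*p2+s*x2)+(t*p3+s*x3) := by
  obtain ⟨hp1l, hp1u⟩ := abs_le.1 hp1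
  obtain ⟨hp2l, hp2u⟩ := abs_le.1 hp2
  obtain ⟨hp3l, hp3u⟩ := abs_le.1 hp3
  obtain ⟨hu1, hu2, hu3⟩ := A3_ub4 h1 h2 h3 h4 h5 h6 h7 h8 h9
  obtain ⟨hq12, hq23, hq13⟩ := A3_pairs h1 h2 h3 h4 h5 h6 h7 h8 h9
  refine ⟨?_, ?_, ?_, ?_, ?_, ?_, ?_, ?_, ?_⟩
  · linarith [mul_le_mul_of_nonneg_left (by linarith : (1:ℝ) ≤ p1) ht,
      mul_le_mul_of_nonneg_left h1 hs]
  · linarith [mul_le_mul_of_nonneg_left (by linarith : (1:ℝ) ≤ p2) ht,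
      mul_le_mul_of_nonneg_left h2 hs]
  · linarith [mul_le_mul_of_nonneg_left (by linarith : (1:ℝ) ≤ p3) ht,
      mul_le_mul_of_nonneg_left h3 hs]
  · linarith [mul_le_mul_of_nonneg_left (by linarith : p1 ≤ p2 + p3) ht,
      mul_le_mul_of_nonneg_left h4 hs]
  · linarith [mul_le_mul_of_nonneg_left (by linarith : p2 ≤ p1 + p3) ht,
      mul_le_mul_of_nonneg_left h5 hs]
  · linarith [mul_le_mul_of_nonneg_left (by linarith : p3 ≤ p1 + p2) ht,
      mul_le_mul_of_nonneg_left h6 hs]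
  · exact A3_quad_interp hp1 hp2 hp3 h1 hu1 h2 hu2 hq12 (by linarith) ht hs hts
  · have := A3_quad_interp (x3 := x1) hp2 hp3 hp1 h2 hu2 h3 hu3 hq23 (by linarith) ht hs hts
    linarith
  · have := A3_quad_interp (x3 := x2) hp1 hp3 hp2 h1 hu1 h3 hu3 hq13 (by linarith) ht hs hts
    linarith

noncomputable def A3_prodToPi3 : (ℝ × ℝ × ℝ) ≃ₗ[ℝ] (Fin 3 → ℝ) where
  toFun p := ![p.1, p.2.1, p.2.2]
  invFun f := (f 0, f 1, f 2)
  map_add' p q := by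
    funext i
    fin_cases i <;> simp
  map_smul' c p := by
    funext i
    fin_cases i <;> simp
  left_inv p := rfl
  right_inv f := by
    funext i
    fin_cases i <;> simp

noncomputable def A3_prodToEuc : (ℝ × ℝ × ℝ) ≃L[ℝ] EuclideanSpace ℝ (Fin 3) :=
  A3_prodToPi3.toContinuousLinearEquiv.trans
    (EuclideanSpace.equiv (Fin 3) ℝ).symm

end A3aux


/-- The superunitary region of the `A₃` cluster algebra (with the cyclic
initial seed), embedded in `ℝ³`, is homeomorphic to the closed unit ball in
three-dimensional Euclidean space. -/
theorem A3_superunitary_region_homeomorph_closed_ball :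
    Nonempty (
      ({p : ℝ × ℝ × ℝ | 1 ≤ p.1 ∧ 1 ≤ p.2.1 ∧ 1 ≤ p.2.2 ∧
          p.1 ≤ p.2.1 + p.2.2 ∧ p.2.1 ≤ p.1 + p.2.2 ∧ p.2.2 ≤ p.1 + p.2.1 ∧
          p.1 * p.2.1 ≤ p.1 + p.2.1 + p.2.2 ∧
          p.2.1 * p.2.2 ≤ p.1 + p.2.1 + p.2.2 ∧
          p.1 * p.2.2 ≤ p.1 + p.2.1 + p.2.2} : Set (ℝ × ℝ × ℝ)) ≃ₜ
        (Metric.closedBall (0 : EuclideanSpace ℝ (Fin 3)) 1)) := by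
  set S : Set (ℝ × ℝ × ℝ) := {p : ℝ × ℝ × ℝ | 1 ≤ p.1 ∧ 1 ≤ p.2.1 ∧ 1 ≤ p.2.2 ∧
          p.1 ≤ p.2.1 + p.2.2 ∧ p.2.1 ≤ p.1 + p.2.2 ∧ p.2.2 ≤ p.1 + p.2.1 ∧
          p.1 * p.2.1 ≤ p.1 + p.2.1 + p.2.2 ∧
          p.2.1 * p.2.2 ≤ p.1 + p.2.1 + p.2.2 ∧
          p.1 * p.2.2 ≤ p.1 + p.2.1 + p.2.2} with hS
  -- S is closed
  have hSclosed : IsClosed S := by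
    have h9 : S = {p : ℝ × ℝ × ℝ | 1 ≤ p.1} ∩ ({p : ℝ × ℝ × ℝ | 1 ≤ p.2.1} ∩
        ({p : ℝ × ℝ × ℝ | 1 ≤ p.2.2} ∩ ({p : ℝ × ℝ × ℝ | p.1 ≤ p.2.1 + p.2.2} ∩
        ({p : ℝ × ℝ × ℝ | p.2.1 ≤ p.1 + p.2.2} ∩ ({p : ℝ × ℝ × ℝ | p.2.2 ≤ p.1 + p.2.1} ∩
        ({p : ℝ × ℝ × ℝ | p.1 * p.2.1 ≤ p.1 + p.2.1 + p.2.2} ∩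
        ({p : ℝ × ℝ × ℝ | p.2.1 * p.2.2 ≤ p.1 + p.2.1 + p.2.2} ∩
        {p : ℝ × ℝ × ℝ | p.1 * p.2.2 ≤ p.1 + p.2.1 + p.2.2}))))))) := rfl
    rw [h9]
    exact (isClosed_le (by fun_prop) (by fun_prop)).inter
      ((isClosed_le (by fun_prop) (by fun_prop)).inter
      ((isClosed_le (by fun_prop) (by fun_prop)).inter
      ((isClosed_le (by fun_prop) (by fun_prop)).inter
      ((isClosed_le (by fun_prop) (by fun_prop)).inter
      ((isClosed_le (by fun_prop) (by fun_prop)).inter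
      ((isClosed_le (by fun_prop) (by fun_prop)).inter
      ((isClosed_le (by fun_prop) (by fun_prop)).inter
      (isClosed_le (by fun_prop) (by fun_prop)))))))))
  -- bounds
  have hb4 : ∀ p : ℝ × ℝ × ℝ, p ∈ S → (1 ≤ p.1 ∧ p.1 ≤ 4) ∧ (1 ≤ p.2.1 ∧ p.2.1 ≤ 4)
      ∧ (1 ≤ p.2.2 ∧ p.2.2 ≤ 4) := by
    rintro ⟨a, b, c⟩ ⟨h1, h2, h3, h4, h5, h6, h7, h8, h9⟩
    obtain ⟨u1, u2, u3⟩ := A3_ub4 h1 h2 h3 h4 h5 h6 h7 h8 h9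
    exact ⟨⟨h1, u1⟩, ⟨h2, u2⟩, ⟨h3, u3⟩⟩
  have hSbounded : Bornology.IsBounded S := by
    apply (Metric.isBounded_closedBall (x := (0 : ℝ × ℝ × ℝ)) (r := 4)).subset
    intro p hp
    obtain ⟨⟨ha1, ha4⟩, ⟨hb1, hb4'⟩, ⟨hc1, hc4⟩⟩ := hb4 p hp
    rw [Metric.mem_closedBall, dist_zero_right, Prod.norm_def, Prod.norm_def]
    rw [Real.norm_eq_abs, Real.norm_eq_abs, Real.norm_eq_abs]
    refine max_le (abs_le.2 ⟨by linarith, ha4⟩) (max_le (abs_le.2 ⟨by linarith, hb4'⟩)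
      (abs_le.2 ⟨by linarith, hc4⟩))
  have hScompact : IsCompact S := Metric.isCompact_of_isClosed_isBounded hSclosed hSbounded
  -- translate by the interior point (2,2,2)
  set cc : ℝ × ℝ × ℝ := (2, 2, 2) with hcc
  set tr : (ℝ × ℝ × ℝ) ≃ₜ (ℝ × ℝ × ℝ) := Homeomorph.addRight cc with htr
  set K : Set (ℝ × ℝ × ℝ) := tr ⁻¹' S with hK
  have hKmem : ∀ q : ℝ × ℝ × ℝ, q ∈ K ↔ (1 ≤ q.1 + 2 ∧ 1 ≤ q.2.1 + 2 ∧ 1 ≤ q.2.2 + 2 ∧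
      q.1 + 2 ≤ (q.2.1 + 2) + (q.2.2 + 2) ∧ q.2.1 + 2 ≤ (q.1 + 2) + (q.2.2 + 2) ∧
      q.2.2 + 2 ≤ (q.1 + 2) + (q.2.1 + 2) ∧
      (q.1 + 2) * (q.2.1 + 2) ≤ (q.1 + 2) + (q.2.1 + 2) + (q.2.2 + 2) ∧
      (q.2.1 + 2) * (q.2.2 + 2) ≤ (q.1 + 2) + (q.2.1 + 2) + (q.2.2 + 2) ∧
      (q.1 + 2) * (q.2.2 + 2) ≤ (q.1 + 2) + (q.2.1 + 2) + (q.2.2 + 2)) := fun q => Iff.rfl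
  have hKcompact : IsCompact K := by
    have himg : K = ⇑tr.symm '' S := by
      ext q
      constructor
      · intro hq
        exact ⟨tr q, hq, by simp⟩
      · rintro ⟨p, hp, rfl⟩
        show tr (tr.symm p) ∈ S
        simpa using hp
    rw [himg]
    exact hScompact.image tr.symm.continuous
  -- the ball of radius 1/12 around the origin consists of star centers of K
  have habs : ∀ y : ℝ × ℝ × ℝ, y ∈ Metric.ball (0 : ℝ × ℝ × ℝ) (1/12) →
      |y.1| ≤ 1/12 ∧ |y.2.1| ≤ 1/12 ∧ |y.2.2| ≤ 1/12 := by
    intro y hy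
    rw [mem_ball_zero_iff] at hy
    refine ⟨?_, ?_, ?_⟩
    · rw [← Real.norm_eq_abs]; exact (norm_fst_le y).trans hy.le
    · rw [← Real.norm_eq_abs]
      exact ((norm_fst_le y.2).trans (norm_snd_le y)).trans hy.le
    · rw [← Real.norm_eq_abs]
      exact ((norm_snd_le y.2).trans (norm_snd_le y)).trans hy.le
  have hball : Metric.ball (0 : ℝ × ℝ × ℝ) (1/12) ⊆ K := by
    intro y hy
    obtain ⟨hy1, hy2, hy3⟩ := habs y hy
    obtain ⟨hy1l, hy1u⟩ := abs_le.1 hy1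
    obtain ⟨hy2l, hy2u⟩ := abs_le.1 hy2
    obtain ⟨hy3l, hy3u⟩ := abs_le.1 hy3
    rw [hKmem y]
    refine ⟨by linarith, by linarith, by linarith, by linarith, by linarith, by linarith,
      ?_, ?_, ?_⟩
    · nlinarith
    · nlinarith
    · nlinarith
  have hstar : ∀ y ∈ Metric.ball (0 : ℝ × ℝ × ℝ) (1/12), StarConvex ℝ y K := by
    intro y hy x hx a b ha hb hab
    obtain ⟨hy1, hy2, hy3⟩ := habs y hy
    have hp1 : |y.1 + 2 - 2| ≤ 1/12 := by simpa using hy1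
    have hp2 : |y.2.1 + 2 - 2| ≤ 1/12 := by simpa using hy2
    have hp3 : |y.2.2 + 2 - 2| ≤ 1/12 := by simpa using hy3
    obtain ⟨g1, g2, g3, g4, g5, g6, g7, g8, g9⟩ := (hKmem x).1 hx
    obtain ⟨c1, c2, c3, c4, c5, c6, c7, c8, c9⟩ :=
      A3_star_core hp1 hp2 hp3 g1 g2 g3 g4 g5 g6 g7 g8 g9 ha hb hab
    rw [hKmem]
    have eA : a * (y.1 + 2) + b * (x.1 + 2) = (a • y + b • x).1 + 2 := by
      show _ = a * y.1 + b * x.1 + 2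
      have hb' : b = 1 - a := by linarith
      subst hb'; ring
    have eB : a * (y.2.1 + 2) + b * (x.2.1 + 2) = (a • y + b • x).2.1 + 2 := by
      show _ = a * y.2.1 + b * x.2.1 + 2
      have hb' : b = 1 - a := by linarith
      subst hb'; ring
    have eC : a * (y.2.2 + 2) + b * (x.2.2 + 2) = (a • y + b • x).2.2 + 2 := by
      show _ = a * y.2.2 + b * x.2.2 + 2
      have hb' : b = 1 - a := by linarith
      subst hb'; ring
    rw [← eA, ← eB, ← eC]
    exact ⟨c1, c2, c3, c4, c5, c6, c7, c8, c9⟩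
  obtain ⟨h₁⟩ := star_homeo_ball (by norm_num : (0:ℝ) < 1/12) hKcompact hball hstar
  have hSK : K ≃ₜ S := (tr.image K).trans (Homeomorph.setCongr (tr.image_preimage S))
  -- second application: the Euclidean ball
  set L : (ℝ × ℝ × ℝ) ≃L[ℝ] EuclideanSpace ℝ (Fin 3) := A3_prodToEuc with hL
  set K₂ : Set (ℝ × ℝ × ℝ) := ⇑L ⁻¹' (Metric.closedBall (0 : EuclideanSpace ℝ (Fin 3)) 1)
    with hK₂
  have hK₂compact : IsCompact K₂ := by
    have himg : K₂ = ⇑L.symm '' (Metric.closedBall (0 : EuclideanSpace ℝ (Fin 3)) 1) := by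
      ext q
      constructor
      · intro hq
        exact ⟨L q, hq, by simp⟩
      · rintro ⟨w, hw, rfl⟩
        rw [hK₂, Set.mem_preimage]
        simpa using hw
    rw [himg]
    exact (isCompact_closedBall _ _).image L.symm.continuous
  have hK₂convex : Convex ℝ K₂ := by
    intro x hx y hy a b ha hb hab
    rw [hK₂, Set.mem_preimage] at hx hy ⊢
    rw [map_add, map_smul, map_smul]
    exact convex_closedBall _ _ hx hy ha hb hab
  have hK₂nhds : K₂ ∈ nhds (0 : ℝ × ℝ × ℝ) := by
    apply L.continuous.continuousAt.preimage_mem_nhds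
    rw [map_zero]
    exact Metric.closedBall_mem_nhds _ one_pos
  obtain ⟨ε₂, hε₂pos, hε₂sub⟩ := Metric.mem_nhds_iff.1 hK₂nhds
  have hstar₂ : ∀ y ∈ Metric.ball (0 : ℝ × ℝ × ℝ) ε₂, StarConvex ℝ y K₂ :=
    fun y hy => hK₂convex.starConvex (hε₂sub hy)
  obtain ⟨h₂⟩ := star_homeo_ball hε₂pos hK₂compact hε₂sub hstar₂
  have him : ⇑L.toHomeomorph '' K₂ = Metric.closedBall (0 : EuclideanSpace ℝ (Fin 3)) 1 :=
    L.toHomeomorph.image_preimage _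
  have hK₂E : K₂ ≃ₜ (Metric.closedBall (0 : EuclideanSpace ℝ (Fin 3)) 1) :=
    (L.toHomeomorph.image K₂).trans (Homeomorph.setCongr him)
  exact ⟨((hSK.symm.trans h₁).trans h₂.symm).trans hK₂E⟩
end

section
/- Let x : ℤ → ℝ satisfy x(i) > 0 and x(i−1)·x(i+1) = x(i)² + 1 for all i ∈ ℤ. Then for every i ∈ ℕ the quantity (x(j+i) + x(j−i))/x(j) is independent of j ∈ ℤ: for all j, k ∈ ℤ one has (x(j+i) + x(j−i)) · x(k) = (x(k+i) + x(k−i)) · x(j). (Well-definedness of the elements t_i with x_j · t_i = x_{j+i} + x_{j−i} for the rank-2 cluster algebra with b = c = 2.) -/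
/-!
The exchange relations at `i` and `i + 1` show that `(x (i + 1) + x (i - 1)) / x i` does not
depend on `i`, so a solution satisfies the linear recurrence `x (i + 1) + x (i - 1) = c * x i`.
For any such sequence, `x (j + n) + x (j - n) = C_n(c) * x j`, where `C_n` is the normalized
Chebyshev polynomial (`C_n(t + t⁻¹) = tⁿ + t⁻ⁿ`).
-/

open Polynomial

section LinearRecurrence

variable {R : Type*} [CommRing R] {x : ℤ → R} {c : R}

theorem add_add_sub_eq_eval_chebyshevC_mul (hlin : ∀ j, x (j + 1) + x (j - 1) = c * x j)
    (n j : ℤ) : x (j + n) + x (j - n) = (Chebyshev.C R n).eval c * x j := by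
  induction n using Chebyshev.induct' generalizing j with
  | zero => simp [two_mul]
  | one => simpa using hlin j
  | add_two n ih₁ ih₀ =>
    have hup := hlin (j + (n + 1))
    have hdown := hlin (j - (n + 1))
    rw [show j + (n + 1) + 1 = j + (n + 2) by ring, show j + (n + 1) - 1 = j + n by ring] at hup
    rw [show j - (n + 1) + 1 = j - n by ring, show j - (n + 1) - 1 = j - (n + 2) by ring] at hdown
    rw [Chebyshev.C_add_two, eval_sub, eval_mul, eval_X]
    linear_combination hup + hdown + c * ih₁ j - ih₀ j
  | neg n ih => rw [Chebyshev.C_neg, sub_neg_eq_add, ← sub_eq_add_neg, add_comm]; exact ih j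

end LinearRecurrence

section ClusterRecurrence

variable {K : Type*} [Field K] {x : ℤ → K}

theorem ne_zero_of_cluster_rec [LinearOrder K] [IsStrictOrderedRing K]
    (hrec : ∀ i, x (i - 1) * x (i + 1) = x i ^ 2 + 1) (i : ℤ) : x i ≠ 0 := by
  have h := hrec (i + 1)
  rw [add_sub_cancel_right] at h
  refine left_ne_zero_of_mul (b := x (i + 1 + 1)) ?_
  rw [h]
  positivity

theorem exists_add_add_sub_eq_mul_of_cluster_rec (hne : ∀ i, x i ≠ 0)
    (hrec : ∀ i, x (i - 1) * x (i + 1) = x i ^ 2 + 1) :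
    ∃ c, ∀ j, x (j + 1) + x (j - 1) = c * x j := by
  have hper : Function.Periodic (fun j => (x (j + 1) + x (j - 1)) / x j) 1 := by
    intro j
    have h := hrec (j + 1)
    rw [add_sub_cancel_right] at h
    simp only [div_eq_div_iff (hne _) (hne _), add_sub_cancel_right]
    linear_combination h - hrec j
  refine ⟨(x 1 + x (-1)) / x 0, fun j => ?_⟩
  have h := hper.int_mul_eq j
  simp only [Int.cast_id, mul_one, zero_add, zero_sub] at h
  rw [← h, div_mul_cancel₀ _ (hne j)]

end ClusterRecurrence

theorem rank2_22_t_well_defined_general (x : ℤ → ℝ)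
    (hrec : ∀ i : ℤ, x (i - 1) * x (i + 1) = x i ^ 2 + 1) :
    ∀ (i : ℕ) (j k : ℤ),
      (x (j + (i : ℤ)) + x (j - (i : ℤ))) * x k =
        (x (k + (i : ℤ)) + x (k - (i : ℤ))) * x j := by
  obtain ⟨c, hlin⟩ :=
    exists_add_add_sub_eq_mul_of_cluster_rec (ne_zero_of_cluster_rec hrec) hrec
  intro i j k
  rw [add_add_sub_eq_eval_chebyshevC_mul hlin, add_add_sub_eq_eval_chebyshevC_mul hlin]
  ring

/-- For a positive solution of the rank-2 `(2,2)` cluster recurrence, the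
quantity `(x (j+i) + x (j-i)) / x j` is independent of `j`; i.e. the
elements `t i` with `x j * t i = x (j+i) + x (j-i)` are well defined. -/
theorem rank2_22_t_well_defined (x : ℤ → ℝ)
    (hpos : ∀ i : ℤ, 0 < x i)
    (hrec : ∀ i : ℤ, x (i - 1) * x (i + 1) = x i ^ 2 + 1) :
    ∀ (i : ℕ) (j k : ℤ),
      (x (j + (i : ℤ)) + x (j - (i : ℤ))) * x k =
        (x (k + (i : ℤ)) + x (k - (i : ℤ))) * x j :=
  rank2_22_t_well_defined_general x hrec
end

section
/- Let x : ℤ → ℝ satisfy x(i) > 0 and x(i−1)·x(i+1) = x(i)² + 1 for all i ∈ ℤ. Then for every j ∈ ℤ and every integer i ≥ 1: x(j+i) + x(j−i) > 2·x(j), and x(j+i+1) + x(j−i−1) > x(j+i) + x(j−i). (Equivalently, at any totally positive point of the rank-2 (2,2) cluster algebra the values of the elements t_i satisfy 2 < t₁ < t₂ < t₃ < ⋯.) -/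
/-!
The recurrence forces the ratio `(x (k + 1) + x (k - 1)) / x k` to be independent of `k`, so `x`
satisfies the linear recurrence `x (k + 1) + x (k - 1) = c * x k`, where `c` is the value of `t₁`.
By AM-GM, `c * x 0 = x 1 + x (-1) > 2 * x 0`, i.e. `c > 2`. The symmetric sums
`s n = x (j + n) + x (j - n)` then satisfy the same recurrence with `s 0 = 2 * x j < c * x j = s 1`,
and a positive sequence with `s (n + 2) - s (n + 1) = (c - 2) * s (n + 1) + (s (n + 1) - s n)`
is strictly increasing.
-/

section Recurrence

variable {K : Type*} [Field K] {x : ℤ → K} {b : K}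

theorem mul_add_shift_eq_of_mul_eq_sq_add (hrec : ∀ i, x (i - 1) * x (i + 1) = x i ^ 2 + b)
    (k : ℤ) : x k * (x (k + 2) + x k) = x (k + 1) * (x (k + 1) + x (k - 1)) := by
  have hk := hrec k
  have hk1 := hrec (k + 1)
  rw [add_sub_cancel_right, add_assoc, one_add_one_eq_two] at hk1
  linear_combination hk1 - hk

theorem add_neighbours_eq_mul_of_mul_eq_sq_add (hx : ∀ k, x k ≠ 0)
    (hrec : ∀ i, x (i - 1) * x (i + 1) = x i ^ 2 + b) (k : ℤ) :
    x (k + 1) + x (k - 1) = (x 1 + x (-1)) / x 0 * x k := by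
  set r : ℤ → K := fun k => (x (k + 1) + x (k - 1)) / x k
  have hr : Function.Periodic r 1 := fun k => by
    simp only [r, add_sub_cancel_right, add_assoc, one_add_one_eq_two]
    rw [div_eq_div_iff (hx _) (hx _)]
    linear_combination mul_add_shift_eq_of_mul_eq_sq_add hrec k
  have hrk : r k = r 0 := by simpa using hr.int_mul_eq k
  simp only [r, zero_add, zero_sub] at hrk
  rw [← hrk, div_mul_cancel₀ _ (hx k)]

end Recurrence

section Ordered

variable {K : Type*} [Field K] [LinearOrder K] [IsStrictOrderedRing K]

theorem two_mul_lt_add_of_sq_lt_mul {a b c : K} (ha : 0 < a) (hc : 0 < c) (h : b ^ 2 < a * c) :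
    2 * b < a + c := by
  nlinarith [sq_nonneg (a - c)]

theorem strictMono_of_add_eq_mul {s : ℕ → K} {c : K} (hc : 2 ≤ c) (h0 : 0 < s 0)
    (h01 : s 0 < s 1) (hs : ∀ n, s (n + 2) + s n = c * s (n + 1)) : StrictMono s := by
  have key : ∀ n, 0 < s n ∧ s n < s (n + 1) := by
    intro n
    induction n with
    | zero => exact ⟨h0, h01⟩
    | succ n ih =>
      obtain ⟨hpos, hlt⟩ := ih
      have hpos' : 0 < s (n + 1) := hpos.trans hlt
      refine ⟨hpos', ?_⟩
      nlinarith [hs n, mul_nonneg (sub_nonneg.2 hc) hpos'.le]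
  exact strictMono_nat_of_lt_succ fun n => (key n).2

end Ordered

/-- For a positive solution of the rank-2 `(2,2)` cluster recurrence, the
values of the elements `t i` satisfy `2 < t 1 < t 2 < t 3 < ⋯`:
for all `i ≥ 1`, `x (j+i) + x (j-i) > 2 * x j` and
`x (j+i+1) + x (j-i-1) > x (j+i) + x (j-i)`. -/
theorem rank2_22_t_strict_mono (x : ℤ → ℝ)
    (hpos : ∀ i : ℤ, 0 < x i)
    (hrec : ∀ i : ℤ, x (i - 1) * x (i + 1) = x i ^ 2 + 1) :
    ∀ (j i : ℤ), 1 ≤ i →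
      2 * x j < x (j + i) + x (j - i) ∧
      x (j + i) + x (j - i) < x (j + i + 1) + x (j - i - 1) := by
  intro j i hi
  set c := (x 1 + x (-1)) / x 0
  have hlin := add_neighbours_eq_mul_of_mul_eq_sq_add (fun k => (hpos k).ne') hrec
  have hc : 2 < c := by
    rw [lt_div_iff₀ (hpos 0)]
    refine two_mul_lt_add_of_sq_lt_mul (hpos 1) (hpos (-1)) ?_
    have h0 := hrec 0
    norm_num at h0
    linarith
  have hmono : StrictMono fun n : ℕ => x (j + n) + x (j - n) := by
    refine strictMono_of_add_eq_mul hc.le ?_ ?_ fun n => ?_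
    · simpa using add_pos (hpos j) (hpos j)
    · simpa [hlin j, ← two_mul] using mul_lt_mul_of_pos_right hc (hpos j)
    · have h1 := hlin (j + n + 1)
      have h2 := hlin (j - n - 1)
      push_cast
      ring_nf at h1 h2 ⊢
      linear_combination h1 + h2
  obtain ⟨n, rfl⟩ := Int.eq_ofNat_of_zero_le (by omega : 0 ≤ i)
  have h0n := hmono (show 0 < n by omega)
  have hnn := hmono n.lt_succ_self
  push_cast at h0n hnn
  simp only [add_zero, sub_zero, ← two_mul] at h0n
  exact ⟨h0n, by simpa only [add_assoc, sub_sub] using hnn⟩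
end

section
/- The superunitary region of the rank-2 cluster algebra with exponents (2,2) is unbounded: the set of pairs (a₁, a₂) ∈ (ℝ_{>0})² for which there exists a function x : ℤ → ℝ with x(1) = a₁, x(2) = a₂, x(i) ≥ 1 for all i ∈ ℤ, and x(i−1)·x(i+1) = x(i)² + 1 for all i ∈ ℤ, is an unbounded subset of ℝ² (for instance it contains (t, t) for every real t ≥ 1). -/
/-- One-sided cluster sequence starting from `t, t`. -/
noncomputable def rank2Y (t : ℝ) : ℕ → ℝ
  | 0 => t
  | 1 => t
  | (n+2) => ((rank2Y t (n+1))^2 + 1) / rank2Y t n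

lemma rank2Y_mono (t : ℝ) (ht : 1 ≤ t) :
    ∀ n, 1 ≤ rank2Y t n ∧ rank2Y t n ≤ rank2Y t (n+1)
  | 0 => ⟨ht, le_of_eq rfl⟩
  | (n+1) => by
    obtain ⟨h1, h2⟩ := rank2Y_mono t ht n
    have h1' : 1 ≤ rank2Y t (n+1) := h1.trans h2
    refine ⟨h1', ?_⟩
    have hd : rank2Y t (n+2) = ((rank2Y t (n+1))^2 + 1) / rank2Y t n := rfl
    rw [hd, le_div_iff₀ (by linarith)]
    nlinarith

lemma rank2Y_rec (t : ℝ) (ht : 1 ≤ t) (n : ℕ) :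
    rank2Y t n * rank2Y t (n+2) = rank2Y t (n+1)^2 + 1 := by
  have h1 := (rank2Y_mono t ht n).1
  have hd : rank2Y t (n+2) = ((rank2Y t (n+1))^2 + 1) / rank2Y t n := rfl
  rw [hd]
  field_simp

/-- The superunitary region of the rank-2 cluster algebra with exponents
`(2,2)` is unbounded, as a subset of `ℝ²`. -/
theorem rank2_22_superunitary_region_unbounded :
    ¬ Bornology.IsBounded
      {p : ℝ × ℝ | 0 < p.1 ∧ 0 < p.2 ∧
        ∃ x : ℤ → ℝ, x 1 = p.1 ∧ x 2 = p.2 ∧ (∀ i : ℤ, 1 ≤ x i) ∧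
          ∀ i : ℤ, x (i - 1) * x (i + 1) = x i ^ 2 + 1} := by
  intro h
  rw [isBounded_iff_forall_norm_le] at h
  obtain ⟨C, hC⟩ := h
  set t : ℝ := max 1 (|C| + 1) with htdef
  have ht : 1 ≤ t := le_max_left _ _
  have htC : |C| + 1 ≤ t := le_max_right _ _
  have hmem : ((t, t) : ℝ × ℝ) ∈
      {p : ℝ × ℝ | 0 < p.1 ∧ 0 < p.2 ∧
        ∃ x : ℤ → ℝ, x 1 = p.1 ∧ x 2 = p.2 ∧ (∀ i : ℤ, 1 ≤ x i) ∧
          ∀ i : ℤ, x (i - 1) * x (i + 1) = x i ^ 2 + 1} := by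
    refine ⟨by simp only; linarith, by simp only; linarith, ?_⟩
    refine ⟨fun i => rank2Y t (max (i - 1) (2 - i)).toNat, ?_, ?_, ?_, ?_⟩
    · have e : (max ((1:ℤ) - 1) (2 - 1)).toNat = 1 := by omega
      beta_reduce
      rw [e]; rfl
    · have e : (max ((2:ℤ) - 1) (2 - 2)).toNat = 1 := by omega
      beta_reduce
      rw [e]; rfl
    · intro i; exact (rank2Y_mono t ht _).1
    · intro i
      rcases lt_or_ge i 1 with hi | hi
      · -- i ≤ 0
        set n : ℕ := (1 - i).toNat with hn
        have e1 : (max (i - 1 - 1) (2 - (i - 1))).toNat = n + 2 := by omega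
        have e2 : (max (i - 1) (2 - i)).toNat = n + 1 := by omega
        have e3 : (max (i + 1 - 1) (2 - (i + 1))).toNat = n := by omega
        beta_reduce
        rw [e1, e2, e3, mul_comm]
        exact rank2Y_rec t ht n
      rcases lt_or_ge i 3 with hi2 | hi3
      · interval_cases i
        · -- i = 1
          have e1 : (max ((1:ℤ) - 1 - 1) (2 - (1 - 1))).toNat = 2 := by omega
          have e2 : (max ((1:ℤ) - 1) (2 - 1)).toNat = 1 := by omega
          have e3 : (max ((1:ℤ) + 1 - 1) (2 - (1 + 1))).toNat = 1 := by omega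
          beta_reduce
          rw [e1, e2, e3]
          have h01 : rank2Y t 0 = rank2Y t 1 := rfl
          have hr := rank2Y_rec t ht 0
          rw [h01] at hr
          linarith [mul_comm (rank2Y t 2) (rank2Y t 1)]
        · -- i = 2
          have e1 : (max ((2:ℤ) - 1 - 1) (2 - (2 - 1))).toNat = 1 := by omega
          have e2 : (max ((2:ℤ) - 1) (2 - 2)).toNat = 1 := by omega
          have e3 : (max ((2:ℤ) + 1 - 1) (2 - (2 + 1))).toNat = 2 := by omega
          beta_reduce
          rw [e1, e2, e3]
          have h01 : rank2Y t 0 = rank2Y t 1 := rfl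
          have hr := rank2Y_rec t ht 0
          rw [h01] at hr
          exact hr
      · -- i ≥ 3
        set n : ℕ := (i - 2).toNat with hn
        have e1 : (max (i - 1 - 1) (2 - (i - 1))).toNat = n := by omega
        have e2 : (max (i - 1) (2 - i)).toNat = n + 1 := by omega
        have e3 : (max (i + 1 - 1) (2 - (i + 1))).toNat = n + 2 := by omega
        beta_reduce
        rw [e1, e2, e3]
        exact rank2Y_rec t ht n
  have hnorm := hC _ hmem
  have : ‖((t, t) : ℝ × ℝ)‖ = t := by
    rw [Prod.norm_def]
    simp [Real.norm_eq_abs, abs_of_nonneg (by linarith : (0:ℝ) ≤ t)]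
  rw [this] at hnorm
  have : C ≤ |C| := le_abs_self C
  linarith
end
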